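/- arXiv:1612.02852 — 11 statements merged into one kernel-verified Lean document; each statement's English description precedes it below -/
import Mathlib

section
/- Let a ≥ 0 and C ∈ ℝ, and let v : ℝ → ℝ be twice continuously differentiable on (a,∞) and satisfy, for all r > a, the radial Hamiltonian stationary ODE with n = 2: v''(r)/(1+v'(r)^2) + (r·v'(r) − v(r))/(r^2+v(r)^2) = C·(1+v'(r)^2)^{1/2}/(r^2+v(r)^2)^{1/2}. Then C = 0; consequently the phase θ(r) = arctan(v'(r)) + arctan(v(r)/r) is constant on (a,∞), i.e., the corresponding radial gradient graph is special Lagrangian. -/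
/-!
Along a solution the phase `θ = arctan v' + arctan (v / r)` satisfies
`θ' = C √(1 + v'²) / √(r² + v²)`, while `ψ = log (r² + v²)` satisfies
`ψ' = 2 (r + v v') / (r² + v²)`. By Cauchy–Schwarz `r + v v' ≤ √(1 + v'²) √(r² + v²)`,
so `2 C θ - C² ψ` is nondecreasing. As `|θ| < π` while `ψ ≥ log r² → ∞`, this forces `C = 0`,
and then `θ' = 0`.
-/

open Real Set Filter

noncomputable def radialPhase (v : ℝ → ℝ) (r : ℝ) : ℝ :=
  arctan (deriv v r) + arctan (v r / r)

lemma abs_radialPhase_lt (v : ℝ → ℝ) (r : ℝ) : |radialPhase v r| < π := by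
  obtain ⟨h₁, h₂⟩ := arctan_mem_Ioo (deriv v r)
  obtain ⟨h₃, h₄⟩ := arctan_mem_Ioo (v r / r)
  rw [radialPhase, abs_lt]
  constructor <;> linarith

lemma hasDerivAt_radialPhase {v : ℝ → ℝ} {r : ℝ} (hv : DifferentiableAt ℝ v r)
    (hv' : DifferentiableAt ℝ (deriv v) r) (hr : r ≠ 0) :
    HasDerivAt (radialPhase v)
      (deriv (deriv v) r / (1 + deriv v r ^ 2) + (r * deriv v r - v r) / (r ^ 2 + v r ^ 2)) r := by
  have hden : r ^ 2 + v r ^ 2 ≠ 0 := by positivity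
  refine (hv'.hasDerivAt.arctan.add
    (hv.hasDerivAt.div (hasDerivAt_id r) hr).arctan).congr_deriv ?_
  simp only [Pi.div_apply, id_eq]
  field_simp

lemma hasDerivAt_log_sq_add_sq {v : ℝ → ℝ} {r : ℝ} (hv : DifferentiableAt ℝ v r) (hr : r ≠ 0) :
    HasDerivAt (fun t => log (t ^ 2 + v t ^ 2))
      (2 * (r + v r * deriv v r) / (r ^ 2 + v r ^ 2)) r := by
  have hden : r ^ 2 + v r ^ 2 ≠ 0 := by positivity
  refine (((hasDerivAt_pow 2 r).add (hv.hasDerivAt.pow 2)).log hden).congr_deriv ?_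
  simp only [Pi.add_apply, Pi.pow_apply]
  ring

lemma tendsto_log_sq_add_sq_atTop (v : ℝ → ℝ) :
    Tendsto (fun t => log (t ^ 2 + v t ^ 2)) atTop atTop :=
  tendsto_log_atTop.comp <| tendsto_atTop_mono (fun t => le_add_of_nonneg_right (sq_nonneg (v t)))
    (tendsto_pow_atTop two_ne_zero)

lemma add_mul_div_sq_add_sq_le_sqrt_div_sqrt (p r w : ℝ) :
    (r + w * p) / (r ^ 2 + w ^ 2) ≤ √(1 + p ^ 2) / √(r ^ 2 + w ^ 2) := by
  rcases (add_nonneg (sq_nonneg r) (sq_nonneg w)).eq_or_lt with hzero | hpos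
  · simp [← hzero]
  have hcs : r + w * p ≤ √(1 + p ^ 2) * √(r ^ 2 + w ^ 2) := by
    rw [← sqrt_mul (by positivity)]
    exact le_sqrt_of_sq_le (by nlinarith [sq_nonneg (w - p * r)])
  calc (r + w * p) / (r ^ 2 + w ^ 2)
      = (r + w * p) / (√(r ^ 2 + w ^ 2) * √(r ^ 2 + w ^ 2)) := by rw [mul_self_sqrt hpos.le]
    _ ≤ √(1 + p ^ 2) * √(r ^ 2 + w ^ 2) / (√(r ^ 2 + w ^ 2) * √(r ^ 2 + w ^ 2)) := by gcongr
    _ = √(1 + p ^ 2) / √(r ^ 2 + w ^ 2) := by field_simp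

lemma monotoneOn_radialPhase_sub_log {a C : ℝ} {v : ℝ → ℝ} (ha : 0 ≤ a)
    (hv : ∀ r ∈ Ioi a, DifferentiableAt ℝ v r)
    (hθ : ∀ r ∈ Ioi a, HasDerivAt (radialPhase v)
      (C * √(1 + deriv v r ^ 2) / √(r ^ 2 + v r ^ 2)) r) :
    MonotoneOn (fun r => 2 * C * radialPhase v r - C ^ 2 * log (r ^ 2 + v r ^ 2)) (Ioi a) := by
  have hderiv : ∀ r ∈ Ioi a, HasDerivAt
      (fun r => 2 * C * radialPhase v r - C ^ 2 * log (r ^ 2 + v r ^ 2))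
      (2 * C ^ 2 * (√(1 + deriv v r ^ 2) / √(r ^ 2 + v r ^ 2)
        - (r + v r * deriv v r) / (r ^ 2 + v r ^ 2))) r := fun r hr => by
    refine (((hθ r hr).const_mul (2 * C)).sub
      ((hasDerivAt_log_sq_add_sq (hv r hr) (ha.trans_lt hr).ne').const_mul (C ^ 2))).congr_deriv ?_
    ring
  refine monotoneOn_of_hasDerivWithinAt_nonneg (convex_Ioi a)
    (fun r hr => (hderiv r hr).continuousAt.continuousWithinAt)
    (fun r hr => (hderiv r (by rwa [interior_Ioi] at hr)).hasDerivWithinAt) (fun r _ => ?_)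
  exact mul_nonneg (by positivity)
    (sub_nonneg.2 (add_mul_div_sq_add_sq_le_sqrt_div_sqrt _ _ _))

lemma eq_zero_of_mul_le_of_tendsto_atTop {ψ : ℝ → ℝ} {c M : ℝ} (hc : 0 ≤ c)
    (hψ : Tendsto ψ atTop atTop) (h : ∀ᶠ R in atTop, c * ψ R ≤ M) : c = 0 := by
  refine (hc.eq_or_lt.resolve_right fun hpos => ?_).symm
  obtain ⟨R, hR, hRM⟩ := ((hψ.const_mul_atTop hpos).eventually_gt_atTop M).and h |>.exists
  linarith

lemma eq_zero_of_hasDerivAt_radialPhase {a C : ℝ} {v : ℝ → ℝ} (ha : 0 ≤ a)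
    (hv : ∀ r ∈ Ioi a, DifferentiableAt ℝ v r)
    (hθ : ∀ r ∈ Ioi a, HasDerivAt (radialPhase v)
      (C * √(1 + deriv v r ^ 2) / √(r ^ 2 + v r ^ 2)) r) :
    C = 0 := by
  set g := fun r => 2 * C * radialPhase v r - C ^ 2 * log (r ^ 2 + v r ^ 2)
  have hmono : MonotoneOn g (Ioi a) := monotoneOn_radialPhase_sub_log ha hv hθ
  have hC : C ^ 2 = 0 := by
    refine eq_zero_of_mul_le_of_tendsto_atTop (sq_nonneg C) (tendsto_log_sq_add_sq_atTop v)
      (M := 2 * |C| * π - g (a + 1)) ?_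
    filter_upwards [eventually_ge_atTop (a + 1)] with R hR
    have hgR : g (a + 1) ≤ g R :=
      hmono (show a < a + 1 by linarith) (show a < R by linarith) hR
    have hθR : C * radialPhase v R ≤ |C| * π := calc
      C * radialPhase v R ≤ |C * radialPhase v R| := le_abs_self _
      _ = |C| * |radialPhase v R| := abs_mul _ _
      _ ≤ |C| * π := by gcongr; exact (abs_radialPhase_lt v R).le
    simp only [g] at hgR
    linarith
  exact pow_eq_zero_iff two_ne_zero |>.1 hC

/-- (Proposition `prop1` of Chen–Warren.)
If `v` is twice continuously differentiable on `(a, ∞)` (`a ≥ 0`) and solves the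
radial Hamiltonian stationary ODE with `n = 2`,
`v''/(1+(v')²) + (r v' − v)/(r²+v²) = C √(1+(v')²)/√(r²+v²)`,
then `C = 0` and the phase `θ(r) = arctan v'(r) + arctan (v(r)/r)` is constant on `(a,∞)`,
i.e. the corresponding radial gradient graph is special Lagrangian. -/
theorem radial_hamiltonian_stationary_dim_two_is_special_lagrangian
    (a C : ℝ) (ha : 0 ≤ a) (v : ℝ → ℝ)
    (hv : ContDiffOn ℝ 2 v (Set.Ioi a))
    (hode : ∀ r ∈ Set.Ioi a,
      deriv (deriv v) r / (1 + (deriv v r) ^ 2)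
        + (r * deriv v r - v r) / (r ^ 2 + (v r) ^ 2)
        = C * Real.sqrt (1 + (deriv v r) ^ 2) / Real.sqrt (r ^ 2 + (v r) ^ 2)) :
    C = 0 ∧ ∀ r ∈ Set.Ioi a, ∀ s ∈ Set.Ioi a,
      Real.arctan (deriv v r) + Real.arctan (v r / r)
        = Real.arctan (deriv v s) + Real.arctan (v s / s) := by
  have hv₁ : ∀ r ∈ Ioi a, DifferentiableAt ℝ v r := fun r hr =>
    (hv.differentiableOn (by norm_num)).differentiableAt (isOpen_Ioi.mem_nhds hr)
  have hv₂ : ∀ r ∈ Ioi a, DifferentiableAt ℝ (deriv v) r := fun r hr =>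
    ((hv.deriv_of_isOpen isOpen_Ioi (m := 1) (by norm_num)).differentiableOn (by norm_num))
      |>.differentiableAt (isOpen_Ioi.mem_nhds hr)
  have hθ : ∀ r ∈ Ioi a, HasDerivAt (radialPhase v)
      (C * √(1 + deriv v r ^ 2) / √(r ^ 2 + v r ^ 2)) r := fun r hr =>
    hode r hr ▸ hasDerivAt_radialPhase (hv₁ r hr) (hv₂ r hr) (ha.trans_lt hr).ne'
  have hC : C = 0 := eq_zero_of_hasDerivAt_radialPhase ha hv₁ hθ
  refine ⟨hC, fun r hr s hs => isOpen_Ioi.is_const_of_deriv_eq_zero isPreconnected_Ioi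
    (fun x hx => (hθ x hx).differentiableAt.differentiableWithinAt)
    (fun x hx => by simp [(hθ x hx).deriv, hC]) hr hs⟩
end

section
/- Let n ≥ 2 be an integer, C ∈ ℝ, 0 ≤ a < b ≤ ∞, and let v : ℝ → ℝ be twice continuously differentiable on (a,b) with θ'(r) = C·((1+v'(r)^2)/(r^2+v(r)^2)^{n−1})^{1/2} for all r ∈ (a,b), where θ(r) = arctan(v'(r)) + (n−1)·arctan(v(r)/r). Then the one-sided limits θ(a⁺) = lim_{r→a⁺} θ(r) and θ(b⁻) = lim_{r→b⁻} θ(r) exist, the improper integral ∫_a^b C^2·(1+v'(r)^2)^{1/2}/(r^2+v(r)^2)^{(n−1)/2} dr converges and equals C·(θ(b⁻) − θ(a⁺)), and in particular this integral is at most |C|·n·π. (This is the one-dimensional form of the statement that the Dirichlet energy of the phase of a radial Hamiltonian stationary graph equals C·Vol(S^{n−1})·[θ(b)−θ(a)] and is always finite.) -/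
/-!
By the phase equation, `θ' = C·g` with `g ≥ 0`, so `θ` is monotone on `(a, b)`; being
`arctan` plus `n - 1` times `arctan`, it takes values in `[-nπ/2, nπ/2]`, so its one-sided limits
at both ends exist. The energy density is `(C·θ)' ≥ 0`, so the improper integral equals
`C·(θ(b⁻) - θ(a⁺))` by the fundamental theorem of calculus, and this is at most `|C|·nπ`.
-/

open MeasureTheory Set Filter Topology

section MonotoneLimits

variable {α β : Type*} [Preorder α] [ConditionallyCompleteLinearOrder β] [TopologicalSpace β]
  [OrderTopology β] {f : α → β} {s : Set α} {l : Filter α} {m M : β}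

theorem MonotoneOn.tendsto_csSup_image (hf : MonotoneOn f s) (hs : s.Nonempty)
    (hbdd : BddAbove (f '' s)) (hl : l ≤ 𝓟 s) (hup : ∀ z ∈ s, ∀ᶠ x in l, z ≤ x) :
    Tendsto f l (𝓝 (sSup (f '' s))) := by
  refine tendsto_order.2 ⟨fun y hy => ?_, fun y hy => ?_⟩
  · obtain ⟨_, ⟨z, hz, rfl⟩, hyz⟩ := exists_lt_of_lt_csSup (hs.image f) hy
    filter_upwards [hup z hz, hl (mem_principal_self s)] with x hzx hx
    exact hyz.trans_le (hf hz hx hzx)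
  · filter_upwards [hl (mem_principal_self s)] with x hx
    exact (le_csSup hbdd (mem_image_of_mem f hx)).trans_lt hy

theorem exists_mem_Icc_tendsto_of_eventually_ge (hf : MonotoneOn f s ∨ AntitoneOn f s)
    (hs : s.Nonempty) (hfs : MapsTo f s (Icc m M)) (hl : l ≤ 𝓟 s)
    (hup : ∀ z ∈ s, ∀ᶠ x in l, z ≤ x) : ∃ L ∈ Icc m M, Tendsto f l (𝓝 L) := by
  have hsub : closure (f '' s) ⊆ Icc m M := isClosed_Icc.closure_subset_iff.2 hfs.image_subset
  rcases hf with hf | hf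
  · have hbdd : BddAbove (f '' s) := bddAbove_Icc.mono hfs.image_subset
    exact ⟨_, hsub (csSup_mem_closure (hs.image f) hbdd), hf.tendsto_csSup_image hs hbdd hl hup⟩
  · have hbdd : BddBelow (f '' s) := bddBelow_Icc.mono hfs.image_subset
    exact ⟨_, hsub (csInf_mem_closure (hs.image f) hbdd),
      hf.dual_right.tendsto_csSup_image hs hbdd hl hup⟩

theorem exists_mem_Icc_tendsto_of_eventually_le (hf : MonotoneOn f s ∨ AntitoneOn f s)
    (hs : s.Nonempty) (hfs : MapsTo f s (Icc m M)) (hl : l ≤ 𝓟 s)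
    (hdown : ∀ z ∈ s, ∀ᶠ x in l, x ≤ z) : ∃ L ∈ Icc m M, Tendsto f l (𝓝 L) :=
  exists_mem_Icc_tendsto_of_eventually_ge (α := αᵒᵈ)
    (hf.symm.imp AntitoneOn.dual_left MonotoneOn.dual_left) hs hfs hl hdown

end MonotoneLimits

theorem monotoneOn_or_antitoneOn_of_hasDerivAt_mul_nonneg {s : Set ℝ} (hs : Convex ℝ s)
    {f g : ℝ → ℝ} (C : ℝ) (hf : ∀ x ∈ s, HasDerivAt f (C * g x) x) (hg : ∀ x ∈ s, 0 ≤ g x) :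
    MonotoneOn f s ∨ AntitoneOn f s := by
  have hcont : ContinuousOn f s := fun x hx => (hf x hx).continuousAt.continuousWithinAt
  have hf' : ∀ x ∈ interior s, HasDerivWithinAt f (C * g x) (interior s) x :=
    fun x hx => (hf x (interior_subset hx)).hasDerivWithinAt
  rcases le_total 0 C with hC | hC
  · exact .inl <| monotoneOn_of_hasDerivWithinAt_nonneg hs hcont hf'
      fun x hx => mul_nonneg hC (hg x (interior_subset hx))
  · exact .inr <| antitoneOn_of_hasDerivWithinAt_nonpos hs hcont hf'
      fun x hx => mul_nonpos_of_nonpos_of_nonneg hC (hg x (interior_subset hx))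

theorem integrableOn_Ioo_and_integral_Ioo_eq_sub_of_hasDerivAt_of_nonneg {a b La Lb : ℝ}
    (hab : a < b) {φ f : ℝ → ℝ} (hd : ∀ x ∈ Ioo a b, HasDerivAt φ (f x) x)
    (hf : ∀ x ∈ Ioo a b, 0 ≤ f x) (ha : Tendsto φ (𝓝[>] a) (𝓝 La))
    (hb : Tendsto φ (𝓝[<] b) (𝓝 Lb)) :
    IntegrableOn f (Ioo a b) ∧ ∫ x in Ioo a b, f x = Lb - La := by
  have hφ : ContinuousOn φ (Ioo a b) := fun x hx => (hd x hx).continuousAt.continuousWithinAt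
  set g := extendFrom (Ioo a b) φ with hg_def
  have hg : ContinuousOn g (Icc a b) := continuousOn_Icc_extendFrom_Ioo hφ ha hb
  have hgd : ∀ x ∈ Ioo a b, HasDerivAt g (f x) x := fun x hx =>
    (hd x hx).congr_of_eventuallyEq <| Eventually.mono (isOpen_Ioo.mem_nhds hx) (extendFrom_extends hφ)
  have hint : IntegrableOn f (Ioc a b) := intervalIntegral.integrableOn_deriv_of_nonneg hg hgd hf
  refine ⟨hint.mono_set Ioo_subset_Ioc_self, ?_⟩
  rw [← integral_Ioc_eq_integral_Ioo, ← intervalIntegral.integral_of_le hab.le,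
    intervalIntegral.integral_eq_sub_of_hasDerivAt_of_le hab.le hg hgd
      ((intervalIntegrable_iff_integrableOn_Ioc_of_le hab.le).2 hint),
    hg_def, eq_lim_at_right_extendFrom_Ioo hab hb, eq_lim_at_left_extendFrom_Ioo hab ha]

theorem integrableOn_Ioi_and_integral_Ioi_eq_sub_of_hasDerivAt_of_nonneg {a La Lb : ℝ}
    {φ f : ℝ → ℝ} (hd : ∀ x ∈ Ioi a, HasDerivAt φ (f x) x) (hf : ∀ x ∈ Ioi a, 0 ≤ f x)
    (ha : Tendsto φ (𝓝[>] a) (𝓝 La)) (hb : Tendsto φ atTop (𝓝 Lb)) :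
    IntegrableOn f (Ioi a) ∧ ∫ x in Ioi a, f x = Lb - La := by
  classical
  set g := Function.update φ a La with hg_def
  have hg : ContinuousWithinAt g (Ici a) a := continuousWithinAt_update_same.2 <|
    ha.mono_left <| nhdsWithin_mono a fun x hx => lt_of_le_of_ne hx.1 (Ne.symm hx.2)
  have hgd : ∀ x ∈ Ioi a, HasDerivAt g (f x) x := fun x hx =>
    (hd x hx).congr_of_eventuallyEq <|
      (eventually_ne_nhds (ne_of_gt hx)).mono fun y hy => Function.update_of_ne hy ..
  have hgb : Tendsto g atTop (𝓝 Lb) :=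
    hb.congr' <| (eventually_gt_atTop a).mono fun y hy => (Function.update_of_ne hy.ne' ..).symm
  refine ⟨integrableOn_Ioi_deriv_of_nonneg hg hgd hf hgb, ?_⟩
  rw [integral_Ioi_of_hasDerivAt_of_nonneg hg hgd hf hgb, hg_def, Function.update_self]

section ERealInterval

variable {a : ℝ} {b : EReal}

theorem convex_setOf_lt_and_coe_lt (a : ℝ) (b : EReal) :
    Convex ℝ {r : ℝ | a < r ∧ (r : EReal) < b} :=
  OrdConnected.convex ⟨fun _ hx _ hy _ hz =>
    ⟨hx.1.trans_le hz.1, (EReal.coe_le_coe_iff.2 hz.2).trans_lt hy.2⟩⟩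

theorem exists_mem_Icc_tendsto_at_ends_of_monotoneOn_or_antitoneOn (hab : (a : EReal) < b)
    {f : ℝ → ℝ} {m M : ℝ} (hf : MonotoneOn f {r | a < r ∧ (r : EReal) < b} ∨
      AntitoneOn f {r | a < r ∧ (r : EReal) < b})
    (hfI : MapsTo f {r | a < r ∧ (r : EReal) < b} (Icc m M)) :
    (∃ La ∈ Icc m M, Tendsto f (𝓝[{r | a < r ∧ (r : EReal) < b}] a) (𝓝 La)) ∧
      ∃ Lb ∈ Icc m M, Tendsto f
        (comap (fun r : ℝ => (r : EReal)) (𝓝 b) ⊓ 𝓟 {r | a < r ∧ (r : EReal) < b}) (𝓝 Lb) := by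
  obtain ⟨c, hac, hcb⟩ := EReal.lt_iff_exists_real_btwn.1 hab
  have hne : {r : ℝ | a < r ∧ (r : EReal) < b}.Nonempty := ⟨c, EReal.coe_lt_coe_iff.1 hac, hcb⟩
  refine ⟨exists_mem_Icc_tendsto_of_eventually_le hf hne hfI inf_le_right fun z hz => ?_,
    exists_mem_Icc_tendsto_of_eventually_ge hf hne hfI inf_le_right fun z hz => ?_⟩
  · exact mem_nhdsWithin_of_mem_nhds (Iic_mem_nhds hz.1)
  · filter_upwards [mem_inf_of_left (preimage_mem_comap (Ioi_mem_nhds hz.2))] with x hx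
    exact (EReal.coe_lt_coe_iff.1 hx).le

theorem integrableOn_and_integral_eq_sub_of_hasDerivAt_of_nonneg (hab : (a : EReal) < b)
    {φ f : ℝ → ℝ} {La Lb : ℝ}
    (hd : ∀ x ∈ {r : ℝ | a < r ∧ (r : EReal) < b}, HasDerivAt φ (f x) x)
    (hf : ∀ x ∈ {r : ℝ | a < r ∧ (r : EReal) < b}, 0 ≤ f x)
    (ha : Tendsto φ (𝓝[{r | a < r ∧ (r : EReal) < b}] a) (𝓝 La))
    (hb : Tendsto φ
      (comap (fun r : ℝ => (r : EReal)) (𝓝 b) ⊓ 𝓟 {r | a < r ∧ (r : EReal) < b}) (𝓝 Lb)) :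
    IntegrableOn f {r | a < r ∧ (r : EReal) < b} ∧
      ∫ x in {r | a < r ∧ (r : EReal) < b}, f x = Lb - La := by
  induction b using EReal.rec with
  | bot => exact absurd hab not_lt_bot
  | coe b =>
    have hI : {r : ℝ | a < r ∧ (r : EReal) < b} = Ioo a b :=
      Set.ext fun _ => and_congr_right' EReal.coe_lt_coe_iff
    have hab : a < b := EReal.coe_lt_coe_iff.1 hab
    rw [hI, nhdsWithin_Ioo_eq_nhdsGT hab] at ha
    rw [hI, ← EReal.isEmbedding_coe.nhds_eq_comap, ← nhdsWithin, nhdsWithin_Ioo_eq_nhdsLT hab] at hb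
    rw [hI] at hd hf ⊢
    exact integrableOn_Ioo_and_integral_Ioo_eq_sub_of_hasDerivAt_of_nonneg hab hd hf ha hb
  | top =>
    have hI : {r : ℝ | a < r ∧ (r : EReal) < ⊤} = Ioi a :=
      Set.ext fun r => and_iff_left (EReal.coe_lt_top r)
    rw [hI] at ha hb hd hf ⊢
    exact integrableOn_Ioi_and_integral_Ioi_eq_sub_of_hasDerivAt_of_nonneg hd hf ha
      (hb.mono_left (le_inf EReal.tendsto_coe_atTop.le_comap (le_principal_iff.2 (Ioi_mem_atTop a))))

theorem abs_arctan_add_mul_arctan_le {m : ℝ} (hm : 0 ≤ m) (x y : ℝ) :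
    |Real.arctan x + m * Real.arctan y| ≤ (1 + m) * (Real.pi / 2) := by
  obtain ⟨hx, hx'⟩ := Real.arctan_mem_Ioo x
  obtain ⟨hy, hy'⟩ := Real.arctan_mem_Ioo y
  exact abs_le.2 ⟨by nlinarith, by nlinarith⟩

theorem radial_phase_energy_finite_general
    (n : ℕ) (hn : 2 ≤ n) (C a : ℝ) (b : EReal) (hab : (a : EReal) < b)
    (v : ℝ → ℝ)
    (I : Set ℝ) (hI : I = {r : ℝ | a < r ∧ (r : EReal) < b})
    (θ : ℝ → ℝ)
    (hθ : θ = fun r => Real.arctan (deriv v r) + ((n : ℝ) - 1) * Real.arctan (v r / r))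
    (hode : ∀ r ∈ I, HasDerivAt θ
      (C * Real.sqrt ((1 + (deriv v r) ^ 2) / (r ^ 2 + (v r) ^ 2) ^ (n - 1))) r) :
    ∃ La Lb : ℝ,
      Filter.Tendsto θ (nhdsWithin a I) (nhds La) ∧
      Filter.Tendsto θ
        ((Filter.comap (fun r : ℝ => (r : EReal)) (nhds b)) ⊓ Filter.principal I)
        (nhds Lb) ∧
      MeasureTheory.IntegrableOn
        (fun r => C ^ 2 * Real.sqrt (1 + (deriv v r) ^ 2)
          / Real.sqrt ((r ^ 2 + (v r) ^ 2) ^ (n - 1))) I ∧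
      (∫ r in I, C ^ 2 * Real.sqrt (1 + (deriv v r) ^ 2)
          / Real.sqrt ((r ^ 2 + (v r) ^ 2) ^ (n - 1))) = C * (Lb - La) ∧
      (∫ r in I, C ^ 2 * Real.sqrt (1 + (deriv v r) ^ 2)
          / Real.sqrt ((r ^ 2 + (v r) ^ 2) ^ (n - 1))) ≤ |C| * n * Real.pi := by
  subst hI
  have hθI : MapsTo θ {r | a < r ∧ (r : EReal) < b}
      (Icc (-(n * Real.pi / 2)) (n * Real.pi / 2)) := fun r _ => by
    have hn1 : (0 : ℝ) ≤ n - 1 := sub_nonneg.2 (Nat.one_le_cast.2 (by omega))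
    have := abs_arctan_add_mul_arctan_le hn1 (deriv v r) (v r / r)
    rw [hθ]
    exact abs_le.1 (by linarith)
  obtain ⟨⟨La, hLa_mem, hLa⟩, Lb, hLb_mem, hLb⟩ :=
    exists_mem_Icc_tendsto_at_ends_of_monotoneOn_or_antitoneOn hab
      (monotoneOn_or_antitoneOn_of_hasDerivAt_mul_nonneg (convex_setOf_lt_and_coe_lt a b) C hode
        fun _ _ => Real.sqrt_nonneg _) hθI
  have henergy : ∀ r ∈ {r : ℝ | a < r ∧ (r : EReal) < b}, HasDerivAt (fun r => C * θ r)
      (C ^ 2 * Real.sqrt (1 + (deriv v r) ^ 2) / Real.sqrt ((r ^ 2 + (v r) ^ 2) ^ (n - 1))) r :=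
    fun r hr => ((hode r hr).const_mul C).congr_deriv <| by
      rw [Real.sqrt_div (by positivity)]
      ring
  obtain ⟨hint, hval⟩ := integrableOn_and_integral_eq_sub_of_hasDerivAt_of_nonneg hab henergy
    (fun _ _ => by positivity) (hLa.const_mul C) (hLb.const_mul C)
  refine ⟨La, Lb, hLa, hLb, hint, by rw [hval]; ring, ?_⟩
  have hdiff : |Lb - La| ≤ n * Real.pi := abs_sub_le_iff.2 ⟨by linarith [hLa_mem.1, hLb_mem.2],
    by linarith [hLa_mem.2, hLb_mem.1]⟩
  calc (∫ r in {r : ℝ | a < r ∧ (r : EReal) < b}, C ^ 2 * Real.sqrt (1 + (deriv v r) ^ 2)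
          / Real.sqrt ((r ^ 2 + (v r) ^ 2) ^ (n - 1)))
      = C * (Lb - La) := by rw [hval]; ring
    _ ≤ |C| * |Lb - La| := (le_abs_self _).trans (abs_mul _ _).le
    _ ≤ |C| * n * Real.pi := by
      rw [mul_assoc]; exact mul_le_mul_of_nonneg_left hdiff (abs_nonneg C)

/-- (Proposition `Efinite` of Chen–Warren, one-dimensional form.)
Let `n ≥ 2`, `C ∈ ℝ`, `0 ≤ a < b ≤ ∞`, and let `v` be C² on `(a,b)` with phase
`θ(r) = arctan v'(r) + (n−1) arctan (v(r)/r)` satisfying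
`θ'(r) = C √((1+(v')²)/(r²+v²)^{n−1})` on `(a,b)`.  Then the one-sided limits
`θ(a⁺)`, `θ(b⁻)` exist, the improper integral
`∫_a^b C² √(1+(v')²)/(r²+v²)^{(n−1)/2} dr` converges with value `C (θ(b⁻) − θ(a⁺))`,
and it is at most `|C| n π`. -/
theorem radial_phase_energy_finite
    (n : ℕ) (hn : 2 ≤ n) (C a : ℝ) (b : EReal) (ha : 0 ≤ a) (hab : (a : EReal) < b)
    (v : ℝ → ℝ)
    (I : Set ℝ) (hI : I = {r : ℝ | a < r ∧ (r : EReal) < b})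
    (hv : ContDiffOn ℝ 2 v I)
    (θ : ℝ → ℝ)
    (hθ : θ = fun r => Real.arctan (deriv v r) + ((n : ℝ) - 1) * Real.arctan (v r / r))
    (hode : ∀ r ∈ I, HasDerivAt θ
      (C * Real.sqrt ((1 + (deriv v r) ^ 2) / (r ^ 2 + (v r) ^ 2) ^ (n - 1))) r) :
    ∃ La Lb : ℝ,
      Filter.Tendsto θ (nhdsWithin a I) (nhds La) ∧
      Filter.Tendsto θ
        ((Filter.comap (fun r : ℝ => (r : EReal)) (nhds b)) ⊓ Filter.principal I)
        (nhds Lb) ∧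
      MeasureTheory.IntegrableOn
        (fun r => C ^ 2 * Real.sqrt (1 + (deriv v r) ^ 2)
          / Real.sqrt ((r ^ 2 + (v r) ^ 2) ^ (n - 1))) I ∧
      (∫ r in I, C ^ 2 * Real.sqrt (1 + (deriv v r) ^ 2)
          / Real.sqrt ((r ^ 2 + (v r) ^ 2) ^ (n - 1))) = C * (Lb - La) ∧
      (∫ r in I, C ^ 2 * Real.sqrt (1 + (deriv v r) ^ 2)
          / Real.sqrt ((r ^ 2 + (v r) ^ 2) ^ (n - 1))) ≤ |C| * n * Real.pi :=
  radial_phase_energy_finite_general n hn C a b hab v I hI θ hθ hode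
end ERealInterval
end

section
/- For every real λ ≥ 2 there exists a twice continuously differentiable function v : [0,∞) → ℝ with v(0) = 1 and v'(0) = 1 satisfying, for all r ≥ 0, v''(r) = −λ·[ (1+v'(r)^2)^{1/2}/(r^2+v(r)^2)^{λ/2} + (r·v'(r) − v(r))/(r^2+v(r)^2) ]·(1+v'(r)^2). In particular, for every integer n > 2 (taking λ = n−1), the radial Hamiltonian stationary ODE with constant C = 1−n ≠ 0 admits a solution on all of (0,∞), which is therefore not special Lagrangian. -/
set_option maxHeartbeats 1000000
open Real Set Topology MeasureTheory intervalIntegral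

namespace CW41

noncomputable def cC (l : ℝ) : ℝ := (l - Real.sqrt 2) / 2

noncomputable def ff (l ρ : ℝ) : ℝ := (cC l - l * ρ ^ 2 / 2) * ρ ^ (-1 - l)

lemma sqrt2_lb : (1.414 : ℝ) ≤ Real.sqrt 2 := by
  nlinarith [Real.sq_sqrt (by norm_num : (2:ℝ) ≥ 0), Real.sqrt_nonneg 2]

lemma sqrt2_ub : Real.sqrt 2 ≤ 1.415 := by
  nlinarith [Real.sq_sqrt (by norm_num : (2:ℝ) ≥ 0), Real.sqrt_nonneg 2]

/-- Second-order Bernoulli: for `a ≥ 2`, `w ≥ 0`: `1 + a w + a(a-1)/2 w² ≤ (1+w)^a`. -/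
lemma bern2 {a : ℝ} (ha : 2 ≤ a) {w : ℝ} (hw : 0 ≤ w) :
    1 + a * w + a * (a - 1) / 2 * w ^ 2 ≤ (1 + w) ^ a := by
  have key : ∀ u : ℝ, 0 ≤ u → a * (1 + u) ^ (a - 1) - a - a * (a - 1) * u ≥ 0 := by
    intro u hu
    have h1 : (1 : ℝ) + (a - 1) * u ≤ (1 + u) ^ (a - 1) :=
      one_add_mul_self_le_rpow_one_add (by linarith) (by linarith)
    nlinarith [h1]
  -- F w := (1+w)^a - 1 - a w - a(a-1)/2 w², F' = a(1+w)^(a-1) - a - a(a-1) w ≥ 0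
  set F : ℝ → ℝ := fun w => (1 + w) ^ a - 1 - a * w - a * (a - 1) / 2 * w ^ 2 with hF
  have hd : ∀ u ∈ interior (Ici (0:ℝ)), HasDerivAt F (a * (1 + u) ^ (a - 1) - a - a * (a - 1) * u) u := by
    intro u hu
    rw [interior_Ici] at hu
    have h0 : (1 : ℝ) + u ≠ 0 := by have : (0:ℝ) < u := hu; linarith
    have h1 : HasDerivAt (fun w : ℝ => (1 + w) ^ a) (a * (1 + u) ^ (a - 1) * 1) u := by
      exact (Real.hasDerivAt_rpow_const (p := a) (Or.inl h0)).comp u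
        ((hasDerivAt_id u).const_add 1)
    have h2 : HasDerivAt F ((a * (1 + u) ^ (a-1) * 1 - a * 1) - a * (a-1)/2 * (2 * u ^ 1)) u := by
      refine HasDerivAt.sub (HasDerivAt.sub (h1.sub_const 1) ?_) ?_
      · exact (hasDerivAt_id u).const_mul a
      · exact (hasDerivAt_pow 2 u).const_mul (a * (a - 1) / 2)
    convert h2 using 1; ring
  have hmono : MonotoneOn F (Ici 0) := by
    refine monotoneOn_of_deriv_nonneg (convex_Ici 0) ?_ ?_ ?_
    · refine ContinuousOn.sub (ContinuousOn.sub (ContinuousOn.sub ?_ (by fun_prop)) (by fun_prop)) (by fun_prop)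
      apply ContinuousOn.rpow_const (by fun_prop)
      intro u hu; left; simp only [mem_Ici] at hu; intro h; linarith
    · intro u hu
      exact (hd u hu).differentiableAt.differentiableWithinAt
    · intro u hu
      rw [(hd u hu).deriv]
      exact key u (le_of_lt (by rwa [interior_Ici] at hu))
  have h0 : F 0 = 0 := by simp [hF]
  have := hmono (self_mem_Ici) (mem_Ici.2 hw) hw
  rw [h0] at this
  simp only [hF] at this
  linarith


variable {l ρ : ℝ}

lemma rpow_pos (hρ : 0 < ρ) (c : ℝ) : 0 < ρ ^ c := Real.rpow_pos_of_pos hρ c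

/-- `ρ^(1+l) = (1+(ρ²-1))^((1+l)/2)` -/
lemma rpow_as (hρ : 0 < ρ) : ρ ^ (1 + l) = (1 + (ρ ^ 2 - 1)) ^ ((1 + l) / 2) := by
  have h2 : (ρ : ℝ) ^ (2 : ℕ) = ρ ^ ((2 : ℕ) : ℝ) := (Real.rpow_natCast ρ 2).symm
  rw [show (1 : ℝ) + (ρ ^ 2 - 1) = ρ ^ (2:ℕ) by ring, h2, ← Real.rpow_mul hρ.le]
  norm_num
  congr 1
  ring

/-- Core estimate: for `l ≥ 2`, `ρ ≥ 1`: `l(ρ²-1)/2 + √2/2 ≤ (4/5) ρ^(1+l)`. -/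
lemma core_ineq (hl : 2 ≤ l) (hρ : 1 ≤ ρ) :
    l * (ρ ^ 2 - 1) / 2 + Real.sqrt 2 / 2 ≤ (4 / 5) * ρ ^ (1 + l) := by
  have hρ0 : (0:ℝ) < ρ := by linarith
  rw [rpow_as hρ0]
  set w : ℝ := ρ ^ 2 - 1 with hw
  have hw0 : 0 ≤ w := by nlinarith
  set a : ℝ := (1 + l) / 2 with ha
  clear_value w a
  have ha1 : (3:ℝ)/2 ≤ a := by rw [ha]; linarith
  have hs2 : Real.sqrt 2 ≤ 1.415 := sqrt2_ub
  have hla : l = 2 * a - 1 := by simp only [ha]; ring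
  rcases le_or_gt a (5/2) with hc | hc
  · have hb : 1 + a * w ≤ (1 + w) ^ a :=
      one_add_mul_self_le_rpow_one_add (by linarith) (by linarith)
    rw [hla]
    nlinarith [hb, mul_nonneg (by linarith : (0:ℝ) ≤ 5/2 - a) hw0]
  · have hb : 1 + a * w + a * (a - 1) / 2 * w ^ 2 ≤ (1 + w) ^ a :=
      bern2 (by linarith) hw0
    rw [hla]
    have hA : (0:ℝ) < a * (a - 1) := by nlinarith
    have hdisc : (2*a - 5)^2 ≤ 14.8 * (a*(a-1)) := by nlinarith
    have h925 : (0.925:ℝ) ≤ 8 - 5 * Real.sqrt 2 := by linarith [sqrt2_ub]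
    have hsq := sq_nonneg (8*(a*(a-1))*w - (2*a - 5))
    have h16 : 0 ≤ 16*(a*(a-1)) * ((8 - 5*Real.sqrt 2) + (5 - 2*a)*w + 4*(a*(a-1))*w^2) := by
      nlinarith [hsq, hdisc, h925, hA]
    have hG : 0 ≤ (8 - 5*Real.sqrt 2) + (5 - 2*a)*w + 4*(a*(a-1))*w^2 := by
      nlinarith [h16, hA]
    linarith [hb, hG]

lemma ff_ge (hl : 2 ≤ l) (hρ : 1 ≤ ρ) : -(4/5) ≤ ff l ρ := by
  have hρ0 : (0:ℝ) < ρ := by linarith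
  have hp : 0 < ρ ^ (1 + l) := rpow_pos hρ0 _
  have hinv : ρ ^ (-1 - l) = (ρ ^ (1 + l))⁻¹ := by
    rw [show -1 - l = -(1 + l) by ring, Real.rpow_neg hρ0.le]
  have hcore := core_ineq hl hρ
  rw [ff, hinv, ← div_eq_mul_inv, le_div_iff₀ hp]
  simp only [cC]
  linarith

lemma ff_le (hl : 2 ≤ l) (hρ : 1 ≤ ρ) : ff l ρ ≤ -(Real.sqrt 2 / 2) * ρ ^ (-1 - l) := by
  have hρ0 : (0:ℝ) < ρ := by linarith
  have hp : 0 < ρ ^ (-1 - l) := rpow_pos hρ0 _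
  have h1 : cC l - l * ρ ^ 2 / 2 ≤ -(Real.sqrt 2 / 2) := by
    simp only [cC]
    nlinarith [mul_nonneg (by linarith : (0:ℝ) ≤ l) (by nlinarith : (0:ℝ) ≤ ρ ^ 2 - 1)]
  rw [ff]
  exact mul_le_mul_of_nonneg_right h1 hp.le

lemma ff_neg (hl : 2 ≤ l) (hρ : 1 ≤ ρ) : ff l ρ < 0 := by
  have hρ0 : (0:ℝ) < ρ := by linarith
  have hp : 0 < ρ ^ (-1 - l) := rpow_pos hρ0 _
  have := ff_le hl hρ
  have h2 : (0:ℝ) < Real.sqrt 2 / 2 := by positivity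
  nlinarith




noncomputable def wW (l ρ : ℝ) : ℝ := Real.sqrt (1 - ff l ρ ^ 2)

noncomputable def gg (l ρ : ℝ) : ℝ := ff l ρ / (ρ * wW l ρ)

noncomputable def th (l ρ : ℝ) : ℝ := π / 2 + ∫ t in (1:ℝ)..ρ, gg l t

noncomputable def ga (l ρ : ℝ) : ℝ := th l ρ + Real.arcsin (ff l ρ)

noncomputable def xx (l ρ : ℝ) : ℝ := ρ * Real.cos (th l ρ)

noncomputable def yy (l ρ : ℝ) : ℝ := ρ * Real.sin (th l ρ)

/-- The regularity region data. -/
def Reg (l ρ₀ : ℝ) : Prop :=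
  2 ≤ l ∧ 1 - 1/500 ≤ ρ₀ ∧ ρ₀ < 1 ∧ (∀ r, ρ₀ ≤ r → (-(9/10) ≤ ff l r ∧ ff l r < 0)) ∧
    ∀ r, ρ₀ ≤ r → r ≤ 1 → ff l r ≤ -(1/2)

lemma Reg.half {l ρ₀ : ℝ} (h : Reg l ρ₀) : (1/2 : ℝ) ≤ ρ₀ := by
  have := h.2.1; linarith

lemma Reg.pos {l ρ₀ ρ : ℝ} (h : Reg l ρ₀) (hρ : ρ₀ ≤ ρ) : 0 < ρ := by
  have := h.half; linarith

lemma ff_hasDeriv {l ρ : ℝ} (hρ : 0 < ρ) :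
    HasDerivAt (ff l) (-l * ρ ^ (-l) - (1 + l) * ff l ρ / ρ) ρ := by
  have h1 : HasDerivAt (fun x : ℝ => cC l - l * x ^ 2 / 2) (-(l * ρ)) ρ := by
    have := (((hasDerivAt_pow 2 ρ).const_mul l).div_const 2).const_sub (cC l)
    apply this.congr_deriv
    simp; ring
  have h2 : HasDerivAt (fun x : ℝ => x ^ (-1 - l)) ((-1 - l) * ρ ^ (-1 - l - 1)) ρ :=
    Real.hasDerivAt_rpow_const (Or.inl hρ.ne')
  have h3 := h1.mul h2
  apply h3.congr_deriv
  have e1 : ρ ^ (-1 - l - 1) = ρ ^ (-1 - l) / ρ := by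
    rw [show -1 - l - 1 = (-1 - l) + (-1) by ring, Real.rpow_add hρ, Real.rpow_neg_one]
    ring
  have e2 : ρ * ρ ^ (-1 - l) = ρ ^ (-l) := by
    nth_rewrite 1 [show ρ = ρ ^ (1:ℝ) by rw [Real.rpow_one]]
    rw [← Real.rpow_add hρ]
    congr 1; ring
  rw [ff, e1, ← e2]
  field_simp
  ring

lemma ff_contAt {l ρ : ℝ} (hρ : 0 < ρ) : ContinuousAt (ff l) ρ :=
  (ff_hasDeriv hρ).continuousAt

lemma wW_contAt {l ρ : ℝ} (hρ : 0 < ρ) : ContinuousAt (wW l) ρ := by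
  have : ContinuousAt (fun x => 1 - ff l x ^ 2) ρ :=
    continuousAt_const.sub ((ff_contAt hρ).pow 2)
  exact Real.continuous_sqrt.continuousAt.comp this

lemma gg_contAt {l ρ : ℝ} (hρ : 0 < ρ) (hW : wW l ρ ≠ 0) : ContinuousAt (gg l) ρ := by
  exact (ff_contAt hρ).div (continuousAt_id.mul (wW_contAt hρ)) (mul_ne_zero hρ.ne' hW)

lemma Reg.ff_bounds {l ρ₀ ρ : ℝ} (h : Reg l ρ₀) (hρ : ρ₀ ≤ ρ) :
    -(9/10) ≤ ff l ρ ∧ ff l ρ < 0 := h.2.2.2.1 ρ hρ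

lemma Reg.ff_sq_le {l ρ₀ ρ : ℝ} (h : Reg l ρ₀) (hρ : ρ₀ ≤ ρ) : ff l ρ ^ 2 ≤ 81/100 := by
  obtain ⟨h1, h2⟩ := h.ff_bounds hρ
  nlinarith

lemma Reg.wW_pos {l ρ₀ ρ : ℝ} (h : Reg l ρ₀) (hρ : ρ₀ ≤ ρ) : 0 < wW l ρ := by
  have := h.ff_sq_le hρ
  rw [wW]
  apply Real.sqrt_pos.2
  linarith

lemma Reg.wW_ge {l ρ₀ ρ : ℝ} (h : Reg l ρ₀) (hρ : ρ₀ ≤ ρ) : 2/5 ≤ wW l ρ := by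
  have := h.ff_sq_le hρ
  rw [wW, show (2/5 : ℝ) = Real.sqrt ((2/5)^2) by rw [Real.sqrt_sq (by norm_num)]]
  apply Real.sqrt_le_sqrt
  norm_num
  linarith

lemma wW_le_one {l ρ : ℝ} : wW l ρ ≤ 1 := by
  rw [wW, show (1:ℝ) = Real.sqrt 1 by rw [Real.sqrt_one]]
  apply Real.sqrt_le_sqrt
  nlinarith [sq_nonneg (ff l ρ), Real.sqrt_one]

lemma Reg.wW_sq {l ρ₀ ρ : ℝ} (h : Reg l ρ₀) (hρ : ρ₀ ≤ ρ) : wW l ρ ^ 2 = 1 - ff l ρ ^ 2 := by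
  have := h.ff_sq_le hρ
  rw [wW, Real.sq_sqrt (by linarith)]

lemma Reg.gg_contAt {l ρ₀ ρ : ℝ} (h : Reg l ρ₀) (hρ : ρ₀ ≤ ρ) : ContinuousAt (gg l) ρ :=
  CW41.gg_contAt (h.pos hρ) (h.wW_pos hρ).ne'

lemma Reg.gg_contOn {l ρ₀ : ℝ} (h : Reg l ρ₀) : ContinuousOn (gg l) (Ici ρ₀) :=
  fun ρ hρ => ((h.gg_contAt hρ)).continuousWithinAt

lemma Reg.gg_intInt {l ρ₀ a b : ℝ} (h : Reg l ρ₀) (ha : ρ₀ ≤ a) (hb : ρ₀ ≤ b) :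
    IntervalIntegrable (gg l) MeasureTheory.volume a b := by
  apply (h.gg_contOn.mono ?_).intervalIntegrable
  intro x hx
  simp only [Set.mem_uIcc] at hx
  simp only [mem_Ici]
  rcases hx with ⟨h1, _⟩ | ⟨h1, _⟩ <;> linarith

lemma Reg.th_hasDeriv {l ρ₀ ρ : ℝ} (h : Reg l ρ₀) (hρ : ρ₀ ≤ ρ) :
    HasDerivAt (th l) (gg l ρ) ρ := by
  have hint : IntervalIntegrable (gg l) MeasureTheory.volume 1 ρ :=
    h.gg_intInt (le_of_lt h.2.2.1) hρ
  have hmeas : StronglyMeasurableAtFilter (gg l) (𝓝 ρ) MeasureTheory.volume := by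
    refine ContinuousAt.stronglyMeasurableAtFilter (s := {x : ℝ | ρ₀/2 < x} ∩ {x : ℝ | wW l x ≠ 0}) ?_ ?_ ρ ?_
    · apply ContinuousOn.isOpen_inter_preimage (t := {(0:ℝ)}ᶜ) ?_ isOpen_Ioi isOpen_compl_singleton
      intro x hx
      exact (wW_contAt (lt_of_le_of_lt (by linarith [h.half] : (0:ℝ) ≤ ρ₀/2) hx)).continuousWithinAt
    · rintro x ⟨hx1, hx2⟩
      exact CW41.gg_contAt (lt_of_le_of_lt (by linarith [h.half] : (0:ℝ) ≤ ρ₀/2) hx1) hx2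
    · exact ⟨by simp only [mem_setOf_eq]; linarith [h.pos hρ, h.half], (h.wW_pos hρ).ne'⟩
  have := intervalIntegral.integral_hasDerivAt_right hint hmeas (h.gg_contAt hρ)
  exact (this.const_add (π / 2))



lemma Reg.one_mem {l ρ₀ : ℝ} (h : Reg l ρ₀) : ρ₀ ≤ 1 := le_of_lt h.2.2.1

lemma Reg.gg_neg {l ρ₀ ρ : ℝ} (h : Reg l ρ₀) (hρ : ρ₀ ≤ ρ) : gg l ρ < 0 := by
  have hp := h.pos hρ
  have hW := h.wW_pos hρ
  have hf := (h.ff_bounds hρ).2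
  exact div_neg_of_neg_of_pos hf (mul_pos hp hW)

lemma Reg.int_gg_nonpos {l ρ₀ ρ : ℝ} (h : Reg l ρ₀) (hρ : 1 ≤ ρ) :
    ∫ t in (1:ℝ)..ρ, gg l t ≤ 0 := by
  have h0 : 0 ≤ ∫ t in (1:ℝ)..ρ, -gg l t := by
    apply intervalIntegral.integral_nonneg hρ
    intro u hu
    have : gg l u < 0 := h.gg_neg (le_trans h.one_mem hu.1)
    linarith
  rw [intervalIntegral.integral_neg] at h0
  linarith

lemma ff_sq_le_on_one {l ρ : ℝ} (hl : 2 ≤ l) (hρ : 1 ≤ ρ) : ff l ρ ^ 2 ≤ 16/25 := by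
  have h1 := ff_ge hl hρ
  have h2 := ff_neg hl hρ
  nlinarith

lemma wW_ge_on_one {l ρ : ℝ} (hl : 2 ≤ l) (hρ : 1 ≤ ρ) : 3/5 ≤ wW l ρ := by
  have := ff_sq_le_on_one hl hρ
  rw [wW, show (3/5 : ℝ) = Real.sqrt ((3/5)^2) by rw [Real.sqrt_sq (by norm_num)]]
  apply Real.sqrt_le_sqrt
  norm_num
  linarith

/-- pointwise comparison: `-gg t ≤ (5/3) ((l/2) t^(-l) - C t^(-2-l))` for `t ≥ 1`. -/
lemma gg_pointwise (l : ℝ) (hl : 2 ≤ l) {t : ℝ} (ht : 1 ≤ t) :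
    -gg l t ≤ (5/3) * ((l/2) * t ^ (-l) - cC l * t ^ (-2-l)) := by
  have ht0 : (0:ℝ) < t := by linarith
  have hW : 3/5 ≤ wW l t := wW_ge_on_one hl ht
  have hWpos : (0:ℝ) < wW l t := by linarith
  have hfneg := ff_neg hl ht
  have e2 : t ^ 2 * t ^ (-2-l) = t ^ (-l) := by
    nth_rewrite 1 [show t = t ^ (1:ℝ) by rw [Real.rpow_one]]
    rw [← Real.rpow_natCast (t ^ (1:ℝ)) 2, ← Real.rpow_mul ht0.le, ← Real.rpow_add ht0]
    congr 1; ring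
  have e3 : t ^ (-1-l) = t * t ^ (-2-l) := by
    nth_rewrite 2 [show t = t ^ (1:ℝ) by rw [Real.rpow_one]]
    rw [← Real.rpow_add ht0]
    congr 1; ring
  have key : -gg l t = (-(ff l t)) / (t * wW l t) := by rw [gg]; ring
  rw [key]
  have step1 : (-(ff l t)) / (t * wW l t) ≤ (-(ff l t)) / (t * (3/5)) := by
    apply div_le_div_of_nonneg_left (by linarith) (by positivity)
    have := mul_le_mul_of_nonneg_left hW (le_of_lt ht0)
    linarith
  apply le_trans step1
  rw [ff, e3]
  rw [div_le_iff₀ (by positivity)]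
  have e5 : l * t * (t ^ 2 * t ^ (-2-l)) = l * t * t ^ (-l) := by rw [e2]
  linarith [e5]

lemma intInt_rpow {c ρ : ℝ} (hρ : 1 ≤ ρ) :
    IntervalIntegrable (fun t : ℝ => t ^ c) MeasureTheory.volume 1 ρ := by
  apply ContinuousOn.intervalIntegrable
  intro x hx
  rw [Set.uIcc_of_le hρ] at hx
  exact (Real.continuousAt_rpow_const x c (Or.inl (by linarith [hx.1]))).continuousWithinAt

lemma int_rpow_eval {c ρ : ℝ} (hρ : 1 ≤ ρ) (hc : c ≠ -1) :
    ∫ t in (1:ℝ)..ρ, t ^ c = (ρ ^ (c+1) - 1) / (c+1) := by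
  rw [integral_rpow (Or.inr ⟨hc, by
    rw [Set.uIcc_of_le hρ]
    intro hmem
    exact absurd hmem.1 (by norm_num)⟩)]
  rw [Real.one_rpow]

lemma Reg.int_gg_ge {l ρ₀ ρ : ℝ} (h : Reg l ρ₀) (hl : 2 ≤ l) (hρ : 1 ≤ ρ) :
    -(38/25) ≤ ∫ t in (1:ℝ)..ρ, gg l t := by
  have hint := h.gg_intInt h.one_mem (le_trans h.one_mem hρ)
  have hintr1 : IntervalIntegrable (fun t : ℝ => t ^ (-l)) MeasureTheory.volume 1 ρ := intInt_rpow hρ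
  have hintr2 : IntervalIntegrable (fun t : ℝ => t ^ (-2-l)) MeasureTheory.volume 1 ρ := intInt_rpow hρ
  have hinth : IntervalIntegrable (fun t : ℝ => (5/3) * ((l/2) * t ^ (-l) - cC l * t ^ (-2-l)))
      MeasureTheory.volume 1 ρ := (((hintr1.const_mul (l/2)).sub (hintr2.const_mul (cC l))).const_mul (5/3))
  have hmono : ∫ t in (1:ℝ)..ρ, -gg l t ≤
      ∫ t in (1:ℝ)..ρ, (5/3) * ((l/2) * t ^ (-l) - cC l * t ^ (-2-l)) := by
    apply intervalIntegral.integral_mono_on hρ hint.neg hinth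
    intro t ht
    exact gg_pointwise l hl ht.1
  have heval : ∫ t in (1:ℝ)..ρ, (5/3) * ((l/2) * t ^ (-l) - cC l * t ^ (-2-l)) =
      (5/3) * ((l/2) * ((ρ ^ (-l+1) - 1)/(-l+1)) - cC l * ((ρ ^ (-2-l+1) - 1)/(-2-l+1))) := by
    rw [intervalIntegral.integral_const_mul]
    rw [intervalIntegral.integral_sub (hintr1.const_mul (l/2)) (hintr2.const_mul (cC l))]
    rw [intervalIntegral.integral_const_mul, intervalIntegral.integral_const_mul]
    rw [int_rpow_eval hρ (by intro hc; nlinarith), int_rpow_eval hρ (by intro hc; nlinarith)]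
  rw [intervalIntegral.integral_neg] at hmono
  -- numeric bound on the evaluated expression
  have hρ0 : (0:ℝ) < ρ := by linarith
  set A : ℝ := ρ ^ (-l+1) with hA
  set B : ℝ := ρ ^ (-2-l+1) with hB
  have hApos : 0 < A := Real.rpow_pos_of_pos hρ0 _
  have hA1 : A ≤ 1 := Real.rpow_le_one_of_one_le_of_nonpos hρ (by linarith)
  have hBpos : 0 < B := Real.rpow_pos_of_pos hρ0 _
  have hBA : B ≤ A := Real.rpow_le_rpow_of_exponent_le hρ (by linarith)
  have hCpos : 0 < cC l := by rw [cC]; nlinarith [sqrt2_ub]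
  have hClb : cC l ≥ (l - 1.415)/2 := by rw [cC]; nlinarith [sqrt2_ub]
  have hbound : (5/3) * ((l/2) * ((A - 1)/(-l+1)) - cC l * ((B - 1)/(-2-l+1))) ≤ 38/25 := by
    have hl1 : (0:ℝ) < l - 1 := by linarith
    have hl2 : (0:ℝ) < l + 1 := by linarith
    have e1 : (A - 1)/(-l+1) = (1 - A)/(l-1) := by
      rw [div_eq_div_iff (by linarith) (by linarith)]; ring
    have e2 : (B - 1)/(-2-l+1) = (1 - B)/(l+1) := by
      rw [div_eq_div_iff (by linarith) (by linarith)]; ring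
    rw [e1, e2]
    -- step 1: drop A, B using C·B/(l+1) ≤ (l/2)·A/(l-1)
    have key : cC l * B / (l+1) ≤ (l/2) * A / (l-1) := by
      have h1 : cC l * B ≤ (l/2) * A := by
        have : cC l ≤ l/2 := by rw [cC]; nlinarith [sqrt2_lb]
        nlinarith
      exact div_le_div₀ (by positivity) h1 (by linarith) (by linarith)
    have expand : (5/3) * ((l/2) * ((1-A)/(l-1)) - cC l * ((1-B)/(l+1))) =
        (5/3) * ((l/2)/(l-1) - cC l/(l+1)) - (5/3)*((l/2)*A/(l-1) - cC l*B/(l+1)) := by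
      field_simp
      ring
    rw [expand]
    have main : (5/3) * ((l/2)/(l-1) - cC l/(l+1)) ≤ 38/25 := by
      rw [show (5:ℝ)/3 * ((l/2)/(l-1) - cC l/(l+1))
            = (5*(l/2)*(l+1) - 5*(cC l)*(l-1)) / (3*((l-1)*(l+1))) by
          field_simp]
      rw [div_le_iff₀ (by nlinarith : (0:ℝ) < 3*((l-1)*(l+1)))]
      nlinarith [hClb, sq_nonneg (l-2)]
    linarith [key, main]
  rw [heval] at hmono
  linarith [hbound]

lemma th_one (l : ℝ) : th l 1 = π/2 := by
  rw [th, intervalIntegral.integral_same, add_zero]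

lemma ff_one {l : ℝ} : ff l 1 = -(Real.sqrt 2/2) := by
  rw [ff, Real.one_rpow, cC]; ring

lemma Reg.th_le_pi2 {l ρ₀ ρ : ℝ} (h : Reg l ρ₀) (hρ : 1 ≤ ρ) : th l ρ ≤ π/2 := by
  have := h.int_gg_nonpos hρ
  rw [th]; linarith

lemma Reg.th_ge {l ρ₀ ρ : ℝ} (h : Reg l ρ₀) (hl : 2 ≤ l) (hρ : 1 ≤ ρ) :
    π/2 - 38/25 ≤ th l ρ := by
  have := h.int_gg_ge hl hρ
  rw [th]; linarith

lemma Reg.gg_abs_le {l ρ₀ x : ℝ} (h : Reg l ρ₀) (hx : ρ₀ ≤ x) : |gg l x| ≤ 5 := by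
  have hW := h.wW_ge hx
  have hWp := h.wW_pos hx
  have hxp := h.pos hx
  have hxh : 1/2 ≤ x := le_trans h.half hx
  obtain ⟨hf1, hf2⟩ := h.ff_bounds hx
  rw [gg, abs_div, abs_of_pos (mul_pos hxp hWp), abs_of_neg hf2]
  rw [div_le_iff₀ (mul_pos hxp hWp)]
  nlinarith

lemma Reg.th_near {l ρ₀ ρ : ℝ} (h : Reg l ρ₀) (hρ : ρ₀ ≤ ρ) (hρ1 : ρ ≤ 1) :
    |th l ρ - π/2| ≤ 1/100 := by
  have : th l ρ - π/2 = ∫ t in (1:ℝ)..ρ, gg l t := by rw [th]; ring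
  rw [this]
  have hb := intervalIntegral.norm_integral_le_of_norm_le_const (C := 5) (f := gg l)
    (a := 1) (b := ρ) (by
      intro x hx
      rw [Set.uIoc_of_ge hρ1] at hx
      exact h.gg_abs_le (le_trans hρ hx.1.le))
  rw [Real.norm_eq_abs] at hb
  have h500 := h.2.1
  calc |∫ t in (1:ℝ)..ρ, gg l t| ≤ 5 * |ρ - 1| := hb
    _ ≤ 1/100 := by rw [abs_of_nonpos (by linarith)]; linarith

lemma arcsin_half_gt : (1/50 : ℝ) ≤ Real.arcsin (1/2) := by
  have h1 : Real.sin (1/50) ≤ 1/2 := by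
    have := Real.sin_le (by norm_num : (0:ℝ) ≤ 1/50)
    linarith
  have h2 : Real.arcsin (Real.sin (1/50)) ≤ Real.arcsin (1/2) :=
    Real.monotone_arcsin h1
  rwa [Real.arcsin_sin (by linarith [Real.pi_gt_d6]) (by linarith [Real.pi_gt_d6])] at h2

lemma Reg.ga_bounds {l ρ₀ ρ : ℝ} (h : Reg l ρ₀) (hl : 2 ≤ l) (hρ : ρ₀ ≤ ρ) :
    -(π/2) < ga l ρ ∧ ga l ρ < π/2 := by
  have hpi := Real.pi_gt_d6
  obtain ⟨hf1, hf2⟩ := h.ff_bounds hρ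
  have harc_lb : -(π/2) < Real.arcsin (ff l ρ) :=
    Real.neg_pi_div_two_lt_arcsin.2 (by linarith)
  rcases le_or_gt 1 ρ with h1 | h1
  · have hle := h.th_le_pi2 h1
    have hge := h.th_ge hl h1
    have harc_neg : Real.arcsin (ff l ρ) < 0 := Real.arcsin_lt_zero.2 hf2
    constructor
    · rw [ga]; linarith
    · rw [ga]; linarith
  · have hnear := h.th_near hρ h1.le
    rw [abs_le] at hnear
    have hhalf : ff l ρ ≤ -(1/2) := h.2.2.2.2 ρ hρ h1.le
    have harc : Real.arcsin (ff l ρ) ≤ -(1/50) := by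
      have := Real.monotone_arcsin hhalf
      have h2 : Real.arcsin (-(1/2)) = -Real.arcsin (1/2) := Real.arcsin_neg (1/2)
      rw [h2] at this
      linarith [arcsin_half_gt]
    constructor
    · rw [ga]; linarith
    · rw [ga]; linarith

lemma Reg.cos_ga_pos {l ρ₀ ρ : ℝ} (h : Reg l ρ₀) (hl : 2 ≤ l) (hρ : ρ₀ ≤ ρ) :
    0 < Real.cos (ga l ρ) := by
  obtain ⟨h1, h2⟩ := h.ga_bounds hl hρ
  exact Real.cos_pos_of_mem_Ioo ⟨h1, h2⟩

lemma Reg.sin_cos_arcsin {l ρ₀ ρ : ℝ} (h : Reg l ρ₀) (hρ : ρ₀ ≤ ρ) :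
    Real.sin (Real.arcsin (ff l ρ)) = ff l ρ ∧
      Real.cos (Real.arcsin (ff l ρ)) = wW l ρ := by
  obtain ⟨hf1, hf2⟩ := h.ff_bounds hρ
  constructor
  · exact Real.sin_arcsin (by linarith) (by linarith)
  · rw [Real.cos_arcsin, wW]

lemma Reg.xx_hasDeriv {l ρ₀ ρ : ℝ} (h : Reg l ρ₀) (hρ : ρ₀ ≤ ρ) :
    HasDerivAt (xx l) (Real.cos (ga l ρ) / wW l ρ) ρ := by
  have hth := h.th_hasDeriv hρ
  have hW := h.wW_pos hρ
  have hρp := h.pos hρ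
  have hd : HasDerivAt (xx l) (1 * Real.cos (th l ρ) + ρ * (-Real.sin (th l ρ) * gg l ρ)) ρ :=
    (hasDerivAt_id ρ).mul ((Real.hasDerivAt_cos (th l ρ)).comp ρ hth)
  apply hd.congr_deriv
  obtain ⟨hs, hc⟩ := h.sin_cos_arcsin hρ
  rw [ga, Real.cos_add, hs, hc, gg]
  field_simp
  ring

lemma Reg.yy_hasDeriv {l ρ₀ ρ : ℝ} (h : Reg l ρ₀) (hρ : ρ₀ ≤ ρ) :
    HasDerivAt (yy l) (Real.sin (ga l ρ) / wW l ρ) ρ := by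
  have hth := h.th_hasDeriv hρ
  have hW := h.wW_pos hρ
  have hρp := h.pos hρ
  have hd : HasDerivAt (yy l) (1 * Real.sin (th l ρ) + ρ * (Real.cos (th l ρ) * gg l ρ)) ρ :=
    (hasDerivAt_id ρ).mul ((Real.hasDerivAt_sin (th l ρ)).comp ρ hth)
  apply hd.congr_deriv
  obtain ⟨hs, hc⟩ := h.sin_cos_arcsin hρ
  rw [ga, Real.sin_add, hs, hc, gg]
  field_simp

lemma Reg.ga_hasDeriv {l ρ₀ ρ : ℝ} (h : Reg l ρ₀) (hl : 2 ≤ l) (hρ : ρ₀ ≤ ρ) :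
    HasDerivAt (ga l) (-(l / wW l ρ) * (ρ ^ (-l) + ff l ρ / ρ)) ρ := by
  have hth := h.th_hasDeriv hρ
  have hρp := h.pos hρ
  have hW := h.wW_pos hρ
  obtain ⟨hf1, hf2⟩ := h.ff_bounds hρ
  have hfd := ff_hasDeriv (l := l) hρp
  have harc : HasDerivAt (fun x => Real.arcsin (ff l x))
      ((1 / Real.sqrt (1 - ff l ρ ^ 2)) * (-l * ρ ^ (-l) - (1 + l) * ff l ρ / ρ)) ρ :=
    (Real.hasDerivAt_arcsin (by intro hc; rw [hc] at hf1; norm_num at hf1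
      ) (by intro hc; rw [hc] at hf2; norm_num at hf2)).comp ρ hfd
  have hd := hth.add harc
  apply hd.congr_deriv
  rw [← wW, gg]
  field_simp
  ring

noncomputable def pp (l ρ : ℝ) : ℝ := Real.tan (ga l ρ)

noncomputable def qq (l ρ : ℝ) : ℝ := -l * (ρ ^ (-l) + ff l ρ / ρ) / (Real.cos (ga l ρ))^3

noncomputable def rm (ρ₀ : ℝ) : ℝ := (ρ₀ + 1)/2

noncomputable def RR (l ρ₀ r : ℝ) : ℝ := Function.invFunOn (xx l) (Ioi (rm ρ₀)) r

noncomputable def vv (l ρ₀ r : ℝ) : ℝ := yy l (RR l ρ₀ r)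

lemma Reg.rm_lt_one {l ρ₀ : ℝ} (h : Reg l ρ₀) : rm ρ₀ < 1 := by
  have := h.2.2.1; rw [rm]; linarith

lemma Reg.rm_gt {l ρ₀ : ℝ} (h : Reg l ρ₀) : ρ₀ < rm ρ₀ := by
  have := h.2.2.1; rw [rm]; linarith

lemma Reg.xx_contOn {l ρ₀ : ℝ} (h : Reg l ρ₀) : ContinuousOn (xx l) (Ici ρ₀) :=
  fun ρ hρ => (h.xx_hasDeriv hρ).continuousAt.continuousWithinAt

lemma Reg.xx_strictMono {l ρ₀ : ℝ} (h : Reg l ρ₀) (hl : 2 ≤ l) :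
    StrictMonoOn (xx l) (Ici ρ₀) := by
  apply strictMonoOn_of_deriv_pos (convex_Ici ρ₀) h.xx_contOn
  intro ρ hρ
  rw [interior_Ici] at hρ
  rw [(h.xx_hasDeriv (le_of_lt hρ)).deriv]
  exact div_pos (h.cos_ga_pos hl (le_of_lt hρ)) (h.wW_pos (le_of_lt hρ))

lemma xx_one (l : ℝ) : xx l 1 = 0 := by
  rw [xx, th_one, Real.cos_pi_div_two, mul_zero]

lemma yy_one (l : ℝ) : yy l 1 = 1 := by
  rw [yy, th_one, Real.sin_pi_div_two, mul_one]

lemma Reg.th_two_lt {l ρ₀ : ℝ} (h : Reg l ρ₀) : th l 2 < π/2 := by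
  have hpos : 0 < ∫ t in (1:ℝ)..2, -gg l t := by
    apply intervalIntegral.intervalIntegral_pos_of_pos_on
      ((h.gg_intInt h.one_mem (by linarith [h.one_mem])).neg)
    · intro x hx
      simp only [Pi.neg_apply]
      linarith [h.gg_neg (le_trans h.one_mem hx.1.le)]
    · norm_num
  rw [intervalIntegral.integral_neg] at hpos
  rw [th]; linarith

lemma Reg.th_le_th_two {l ρ₀ ρ : ℝ} (h : Reg l ρ₀) (hρ : 2 ≤ ρ) : th l ρ ≤ th l 2 := by
  have h12 : ρ₀ ≤ 1 := h.one_mem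
  have hadj := intervalIntegral.integral_add_adjacent_intervals
    (h.gg_intInt (a := 1) (b := 2) h12 (by linarith))
    (h.gg_intInt (a := 2) (b := ρ) (by linarith) (by linarith : ρ₀ ≤ ρ))
  have hnn : 0 ≤ ∫ t in (2:ℝ)..ρ, -gg l t := by
    apply intervalIntegral.integral_nonneg hρ
    intro u hu
    have : gg l u < 0 := h.gg_neg (by linarith [hu.1])
    linarith
  rw [intervalIntegral.integral_neg] at hnn
  rw [th, th]
  have : ∫ t in (1:ℝ)..ρ, gg l t = (∫ t in (1:ℝ)..2, gg l t) + ∫ t in (2:ℝ)..ρ, gg l t :=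
    hadj.symm
  rw [this]; linarith

lemma Reg.xx_tendsto {l ρ₀ : ℝ} (h : Reg l ρ₀) (hl : 2 ≤ l) :
    Filter.Tendsto (xx l) Filter.atTop Filter.atTop := by
  have hpi := Real.pi_gt_d6
  have hth2pos : 0 < th l 2 := by linarith [h.th_ge hl (by norm_num : (1:ℝ) ≤ 2)]
  have hc2 : 0 < Real.cos (th l 2) :=
    Real.cos_pos_of_mem_Ioo ⟨by linarith [h.th_two_lt], h.th_two_lt⟩
  apply Filter.tendsto_atTop_mono' Filter.atTop ?_
    (Filter.Tendsto.const_mul_atTop hc2 Filter.tendsto_id)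
  filter_upwards [Filter.eventually_ge_atTop (2:ℝ)] with ρ hρ
  have h1ρ : (1:ℝ) ≤ ρ := by linarith
  have hcc : Real.cos (th l 2) ≤ Real.cos (th l ρ) := by
    apply Real.cos_le_cos_of_nonneg_of_le_pi
    · linarith [h.th_ge hl h1ρ]
    · linarith [h.th_two_lt]
    · exact h.th_le_th_two hρ
  show Real.cos (th l 2) * id ρ ≤ xx l ρ
  rw [xx, id]
  calc Real.cos (th l 2) * ρ ≤ Real.cos (th l ρ) * ρ := by nlinarith
    _ = ρ * Real.cos (th l ρ) := by ring
  
lemma Reg.exists_root {l ρ₀ r : ℝ} (h : Reg l ρ₀) (hl : 2 ≤ l)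
    (hr : xx l (rm ρ₀) < r) : ∃ ρ ∈ Ioi (rm ρ₀), xx l ρ = r := by
  obtain ⟨b, hb⟩ := ((h.xx_tendsto hl).eventually_ge_atTop (r+1)).exists_forall_of_atTop
  set b' : ℝ := max b (rm ρ₀ + 1) with hb'
  have hbb : r + 1 ≤ xx l b' := hb b' (le_max_left _ _)
  have hrmb : rm ρ₀ ≤ b' := by
    have := le_max_right b (rm ρ₀ + 1); linarith
  have hsub : Icc (rm ρ₀) b' ⊆ Ici ρ₀ := fun x hx => le_trans (le_of_lt h.rm_gt) hx.1
  have hIVT := intermediate_value_Ioo hrmb (h.xx_contOn.mono hsub)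
  have hrmem : r ∈ Ioo (xx l (rm ρ₀)) (xx l b') := ⟨hr, by linarith⟩
  obtain ⟨ρ, hρmem, hρeq⟩ := hIVT hrmem
  exact ⟨ρ, hρmem.1, hρeq⟩

lemma Reg.RR_spec {l ρ₀ r : ℝ} (h : Reg l ρ₀) (hl : 2 ≤ l)
    (hr : xx l (rm ρ₀) < r) : RR l ρ₀ r ∈ Ioi (rm ρ₀) ∧ xx l (RR l ρ₀ r) = r :=
  ⟨Function.invFunOn_mem (h.exists_root hl hr), Function.invFunOn_eq (h.exists_root hl hr)⟩

lemma Reg.RR_eq_of {l ρ₀ r ρ : ℝ} (h : Reg l ρ₀) (hl : 2 ≤ l)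
    (hρ : ρ ∈ Ioi (rm ρ₀)) (hxρ : xx l ρ = r) : RR l ρ₀ r = ρ := by
  have hr : xx l (rm ρ₀) < r := by
    rw [← hxρ]
    exact h.xx_strictMono hl (le_of_lt h.rm_gt) (le_trans (le_of_lt h.rm_gt) (le_of_lt hρ)) hρ
  obtain ⟨hmem, heq⟩ := h.RR_spec hl hr
  have hinj := (h.xx_strictMono hl).injOn
  exact hinj (le_trans (le_of_lt h.rm_gt) (le_of_lt hmem)) (le_trans (le_of_lt h.rm_gt) (le_of_lt hρ)) (heq.trans hxρ.symm)

lemma Reg.mem_of_gt_rm {l ρ₀ ρ : ℝ} (h : Reg l ρ₀) (hρ : rm ρ₀ < ρ) : ρ₀ ≤ ρ :=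
  le_trans (le_of_lt h.rm_gt) (le_of_lt hρ)

lemma Reg.RR_contAt {l ρ₀ r : ℝ} (h : Reg l ρ₀) (hl : 2 ≤ l)
    (hr : xx l (rm ρ₀) < r) : ContinuousAt (RR l ρ₀) r := by
  rw [Metric.continuousAt_iff]
  intro ε hε
  obtain ⟨hmem, heq⟩ := h.RR_spec hl hr
  set ρ : ℝ := RR l ρ₀ r with hρdef
  rw [mem_Ioi] at hmem
  set ε' : ℝ := min (ε/2) ((ρ - rm ρ₀)/2) with hε'def
  have hε' : 0 < ε' := lt_min (by linarith) (by linarith)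
  have hm1 : rm ρ₀ < ρ - ε' := by
    have : ε' ≤ (ρ - rm ρ₀)/2 := min_le_right _ _
    linarith
  have hmono := h.xx_strictMono hl
  have hin1 : ρ - ε' ∈ Ici ρ₀ := h.mem_of_gt_rm hm1
  have hin2 : ρ ∈ Ici ρ₀ := h.mem_of_gt_rm hmem
  have hin3 : ρ + ε' ∈ Ici ρ₀ := h.mem_of_gt_rm (by linarith)
  have hlt1 : xx l (ρ - ε') < r := by
    rw [← heq]; exact hmono hin1 hin2 (by linarith)
  have hlt2 : r < xx l (ρ + ε') := by
    rw [← heq]; exact hmono hin2 hin3 (by linarith)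
  refine ⟨min (xx l (ρ + ε') - r) (r - xx l (ρ - ε')), lt_min (by linarith) (by linarith), ?_⟩
  intro r' hr'
  rw [Real.dist_eq] at hr' ⊢
  rw [abs_lt] at hr'
  have hr'1 : xx l (ρ - ε') < r' := by
    have := min_le_right (xx l (ρ + ε') - r) (r - xx l (ρ - ε')); linarith
  have hr'2 : r' < xx l (ρ + ε') := by
    have := min_le_left (xx l (ρ + ε') - r) (r - xx l (ρ - ε')); linarith
  have hrm' : xx l (rm ρ₀) < r' := by
    have : xx l (rm ρ₀) < xx l (ρ - ε') :=
      hmono (le_of_lt h.rm_gt) hin1 (by linarith)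
    linarith
  obtain ⟨hmem', heq'⟩ := h.RR_spec hl hrm'
  set ρ' : ℝ := RR l ρ₀ r' with hρ'def
  rw [mem_Ioi] at hmem'
  have hin4 : ρ' ∈ Ici ρ₀ := h.mem_of_gt_rm hmem'
  have hup : ρ' < ρ + ε' := by
    by_contra hcon
    push_neg at hcon
    have := hmono.monotoneOn hin3 hin4 hcon
    rw [heq'] at this
    linarith
  have hdown : ρ - ε' < ρ' := by
    by_contra hcon
    push_neg at hcon
    have := hmono.monotoneOn hin4 hin1 hcon
    rw [heq'] at this
    linarith
  rw [abs_lt]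
  have : ε' ≤ ε/2 := min_le_left _ _
  constructor <;> linarith

lemma Reg.RR_hasDeriv {l ρ₀ r : ℝ} (h : Reg l ρ₀) (hl : 2 ≤ l)
    (hr : xx l (rm ρ₀) < r) :
    HasDerivAt (RR l ρ₀)
      ((Real.cos (ga l (RR l ρ₀ r)) / wW l (RR l ρ₀ r))⁻¹) r := by
  obtain ⟨hmem, heq⟩ := h.RR_spec hl hr
  have hρ₀le : ρ₀ ≤ RR l ρ₀ r := h.mem_of_gt_rm hmem
  have hXpos : 0 < Real.cos (ga l (RR l ρ₀ r)) / wW l (RR l ρ₀ r) :=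
    div_pos (h.cos_ga_pos hl hρ₀le) (h.wW_pos hρ₀le)
  apply HasDerivAt.of_local_left_inverse (h.RR_contAt hl hr) (h.xx_hasDeriv hρ₀le) hXpos.ne' ?_
  filter_upwards [Ioi_mem_nhds hr] with y hy
  exact (h.RR_spec hl hy).2

lemma Reg.vv_hasDeriv {l ρ₀ r : ℝ} (h : Reg l ρ₀) (hl : 2 ≤ l)
    (hr : xx l (rm ρ₀) < r) :
    HasDerivAt (vv l ρ₀) (pp l (RR l ρ₀ r)) r := by
  obtain ⟨hmem, heq⟩ := h.RR_spec hl hr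
  have hρ₀le : ρ₀ ≤ RR l ρ₀ r := h.mem_of_gt_rm hmem
  have hd := (h.yy_hasDeriv hρ₀le).comp r (h.RR_hasDeriv hl hr)
  apply hd.congr_deriv
  have hc := h.cos_ga_pos hl hρ₀le
  have hW := h.wW_pos hρ₀le
  rw [pp, Real.tan_eq_sin_div_cos]
  field_simp

lemma Reg.ppRR_hasDeriv {l ρ₀ r : ℝ} (h : Reg l ρ₀) (hl : 2 ≤ l)
    (hr : xx l (rm ρ₀) < r) :
    HasDerivAt (fun y => pp l (RR l ρ₀ y)) (qq l (RR l ρ₀ r)) r := by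
  obtain ⟨hmem, heq⟩ := h.RR_spec hl hr
  have hρ₀le : ρ₀ ≤ RR l ρ₀ r := h.mem_of_gt_rm hmem
  have hc := h.cos_ga_pos hl hρ₀le
  have hW := h.wW_pos hρ₀le
  have htan : HasDerivAt Real.tan (1 / Real.cos (ga l (RR l ρ₀ r)) ^ 2) (ga l (RR l ρ₀ r)) :=
    Real.hasDerivAt_tan hc.ne'
  have h1 : HasDerivAt (fun x => pp l x)
      (1 / Real.cos (ga l (RR l ρ₀ r)) ^ 2 * (-(l / wW l (RR l ρ₀ r)) *
        ((RR l ρ₀ r) ^ (-l) + ff l (RR l ρ₀ r) / RR l ρ₀ r))) (RR l ρ₀ r) :=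
    htan.comp _ (h.ga_hasDeriv hl hρ₀le)
  have hd := h1.comp r (h.RR_hasDeriv hl hr)
  apply hd.congr_deriv
  rw [qq]
  field_simp

lemma Reg.main_id {l ρ₀ ρ : ℝ} (h : Reg l ρ₀) (hl : 2 ≤ l) (hρ : ρ₀ ≤ ρ) :
    qq l ρ = -l * (Real.sqrt (1 + pp l ρ ^ 2) / ((xx l ρ) ^ 2 + (yy l ρ) ^ 2) ^ (l/2)
        + (xx l ρ * pp l ρ - yy l ρ) / ((xx l ρ) ^ 2 + (yy l ρ) ^ 2))
      * (1 + pp l ρ ^ 2) := by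
  have hρp := h.pos hρ
  have hc := h.cos_ga_pos hl hρ
  have hW := h.wW_pos hρ
  have hsum : (xx l ρ) ^ 2 + (yy l ρ) ^ 2 = ρ ^ 2 := by
    rw [xx, yy]
    nlinarith [Real.sin_sq_add_cos_sq (th l ρ)]
  have hpow : ((ρ:ℝ) ^ 2) ^ (l/2) = ρ ^ l := by
    rw [show ((ρ:ℝ) ^ 2) = ρ ^ ((2:ℕ):ℝ) from (Real.rpow_natCast ρ 2).symm,
      ← Real.rpow_mul hρp.le]
    rw [show ((2:ℕ):ℝ) * (l/2) = l by push_cast; ring]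
  have h1p : 1 + pp l ρ ^ 2 = (Real.cos (ga l ρ) ^ 2)⁻¹ := by
    have := Real.inv_one_add_tan_sq hc.ne'
    rw [pp, add_comm]
    field_simp at this ⊢
    nlinarith [this]
  have hsqrt : Real.sqrt (1 + pp l ρ ^ 2) = (Real.cos (ga l ρ))⁻¹ := by
    rw [h1p, Real.sqrt_inv, Real.sqrt_sq hc.le]
  have hxy : xx l ρ * pp l ρ - yy l ρ = ρ * ff l ρ / Real.cos (ga l ρ) := by
    obtain ⟨hf1, hf2⟩ := h.ff_bounds hρ
    have hsin : Real.sin (ga l ρ - th l ρ) = ff l ρ := by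
      rw [ga, add_sub_cancel_left, Real.sin_arcsin (by linarith) (by linarith)]
    rw [Real.sin_sub] at hsin
    rw [xx, yy, pp, Real.tan_eq_sin_div_cos]
    field_simp
    nlinarith [hsin]
  rw [qq, hsum, hpow, hsqrt, hxy, h1p, Real.rpow_neg hρp.le]
  have hρl : 0 < ρ ^ l := Real.rpow_pos_of_pos hρp l
  field_simp

lemma Reg.RR_zero {l ρ₀ : ℝ} (h : Reg l ρ₀) (hl : 2 ≤ l) : RR l ρ₀ 0 = 1 :=
  h.RR_eq_of hl (mem_Ioi.2 h.rm_lt_one) (xx_one l)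

lemma ga_one {l : ℝ} : ga l 1 = π/4 := by
  have harc : Real.arcsin (Real.sqrt 2 / 2) = π/4 := by
    rw [← Real.sin_pi_div_four]
    exact Real.arcsin_sin (by linarith [Real.pi_pos]) (by linarith [Real.pi_pos])
  rw [ga, th_one, ff_one, show -(Real.sqrt 2/2) = -(Real.sqrt 2/2) from rfl]
  rw [show Real.arcsin (-(Real.sqrt 2/2)) = -Real.arcsin (Real.sqrt 2/2) from Real.arcsin_neg _]
  rw [harc]
  ring

lemma pp_one {l : ℝ} : pp l 1 = 1 := by
  rw [pp, ga_one, Real.tan_pi_div_four]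

lemma Reg.qq_contAt {l ρ₀ ρ : ℝ} (h : Reg l ρ₀) (hl : 2 ≤ l) (hρ : ρ₀ ≤ ρ) :
    ContinuousAt (qq l) ρ := by
  have hρp := h.pos hρ
  have hc := h.cos_ga_pos hl hρ
  have hga : ContinuousAt (ga l) ρ := by
    apply ContinuousAt.add (h.th_hasDeriv hρ).continuousAt
    exact Real.continuous_arcsin.continuousAt.comp (ff_contAt hρp)
  have hcos : ContinuousAt (fun x => Real.cos (ga l x) ^ 3) ρ :=
    (Real.continuous_cos.continuousAt.comp hga).pow 3
  apply ContinuousAt.div ?_ hcos (by positivity)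
  apply ContinuousAt.mul continuousAt_const
  apply ContinuousAt.add (Real.continuousAt_rpow_const ρ (-l) (Or.inl hρp.ne'))
  exact (ff_contAt hρp).div continuousAt_id hρp.ne'

lemma exists_reg {l : ℝ} (hl : 2 ≤ l) : ∃ ρ₀, Reg l ρ₀ := by
  have hc : ContinuousAt (ff l) 1 := ff_contAt one_pos
  have hmem : ff l 1 ∈ Ioo (-(9/10) : ℝ) (-(1/2)) := by
    rw [ff_one]
    constructor
    · nlinarith [sqrt2_ub]
    · nlinarith [sqrt2_lb]
  have hev := hc.preimage_mem_nhds (isOpen_Ioo.mem_nhds hmem)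
  rw [Metric.mem_nhds_iff] at hev
  obtain ⟨δ, hδ, hball⟩ := hev
  refine ⟨max (1 - δ/2) (1 - 1/500), hl, le_max_right _ _, ?_, ?_, ?_⟩
  · apply max_lt (by linarith) (by norm_num)
  · intro r hr
    rcases le_or_gt 1 r with h1 | h1
    · exact ⟨by linarith [ff_ge hl h1], ff_neg hl h1⟩
    · have hballr : r ∈ Metric.ball (1:ℝ) δ := by
        rw [Metric.mem_ball, Real.dist_eq, abs_of_nonpos (by linarith)]
        have := le_trans (le_max_left (1 - δ/2) (1 - 1/500)) hr
        linarith
      have := hball hballr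
      rw [mem_preimage, mem_Ioo] at this
      exact ⟨le_of_lt this.1, by linarith [this.2]⟩
  · intro r hr hr1
    rcases lt_or_eq_of_le hr1 with h1 | h1
    · have hballr : r ∈ Metric.ball (1:ℝ) δ := by
        rw [Metric.mem_ball, Real.dist_eq, abs_of_nonpos (by linarith)]
        have := le_trans (le_max_left (1 - δ/2) (1 - 1/500)) hr
        linarith
      have := hball hballr
      rw [mem_preimage, mem_Ioo] at this
      linarith [this.2]
    · rw [h1, ff_one]
      nlinarith [sqrt2_lb]

lemma Reg.xx_rm_neg {l ρ₀ : ℝ} (h : Reg l ρ₀) (hl : 2 ≤ l) : xx l (rm ρ₀) < 0 := by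
  rw [← xx_one l]
  exact h.xx_strictMono hl (le_of_lt h.rm_gt) (le_trans (le_of_lt h.rm_gt) (le_of_lt h.rm_lt_one)) h.rm_lt_one

end CW41

open CW41

/-- (Proposition `prop41` of Chen–Warren.)
For every real `λ ≥ 2` there exists a twice continuously differentiable function
`v : [0,∞) → ℝ` with `v(0) = 1`, `v'(0) = 1` satisfying, for all `r ≥ 0`,
`v'' = −λ [√(1+(v')²)/(r²+v²)^{λ/2} + (r v' − v)/(r²+v²)] (1+(v')²)`.
(For `λ = n − 1`, `n > 2`, this is the radial Hamiltonian stationary ODE with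
constant `C = 1 − n ≠ 0`, hence a non-special-Lagrangian solution on `(0,∞)`.) -/
theorem exists_global_solution_F_lambda (l : ℝ) (hl : 2 ≤ l) :
    ∃ v : ℝ → ℝ, ContDiffOn ℝ 2 v (Set.Ici 0) ∧ v 0 = 1 ∧
      derivWithin v (Set.Ici 0) 0 = 1 ∧
      ∀ r ∈ Set.Ici (0 : ℝ),
        derivWithin (derivWithin v (Set.Ici 0)) (Set.Ici 0) r
          = -l * (Real.sqrt (1 + (derivWithin v (Set.Ici 0) r) ^ 2)
                    / (r ^ 2 + (v r) ^ 2) ^ (l / 2)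
                + (r * derivWithin v (Set.Ici 0) r - v r) / (r ^ 2 + (v r) ^ 2))
              * (1 + (derivWithin v (Set.Ici 0) r) ^ 2) := by
  obtain ⟨ρ₀, h⟩ := exists_reg hl
  have hrm0 : xx l (rm ρ₀) < 0 := h.xx_rm_neg hl
  set T : Set ℝ := Ioi (xx l (rm ρ₀)) with hTdef
  have hsub : Ici (0:ℝ) ⊆ T := fun y hy => lt_of_lt_of_le hrm0 hy
  have hTr : ∀ r ∈ T, xx l (rm ρ₀) < r := fun r hr => hr
  -- derivWithin-to-deriv conversions
  have hdW : ∀ r ∈ Ici (0:ℝ), derivWithin (vv l ρ₀) (Ici 0) r = pp l (RR l ρ₀ r) := by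
    intro r hr
    rw [(h.vv_hasDeriv hl (hTr r (hsub hr))).differentiableAt.derivWithin
      (uniqueDiffOn_Ici 0 r hr)]
    exact (h.vv_hasDeriv hl (hTr r (hsub hr))).deriv
  have hdv : ∀ r ∈ T, deriv (vv l ρ₀) r = pp l (RR l ρ₀ r) :=
    fun r hr => (h.vv_hasDeriv hl (hTr r hr)).deriv
  have hdpp : ∀ r ∈ T, deriv (fun y => pp l (RR l ρ₀ y)) r = qq l (RR l ρ₀ r) :=
    fun r hr => (h.ppRR_hasDeriv hl (hTr r hr)).deriv
  -- ContDiffOn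
  have hcd : ContDiffOn ℝ 2 (vv l ρ₀) T := by
    rw [show (2 : WithTop ℕ∞) = 1 + 1 by norm_num]
    rw [contDiffOn_succ_iff_deriv_of_isOpen isOpen_Ioi]
    refine ⟨fun y hy => (h.vv_hasDeriv hl (hTr y hy)).differentiableAt.differentiableWithinAt,
      by simp, ?_⟩
    apply ContDiffOn.congr (f := fun y => pp l (RR l ρ₀ y)) ?_ (fun y hy => hdv y hy)
    rw [show (1 : WithTop ℕ∞) = 0 + 1 by norm_num]
    rw [contDiffOn_succ_iff_deriv_of_isOpen isOpen_Ioi]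
    refine ⟨fun y hy => (h.ppRR_hasDeriv hl (hTr y hy)).differentiableAt.differentiableWithinAt,
      by simp, ?_⟩
    rw [contDiffOn_zero]
    apply ContinuousOn.congr (f := fun y => qq l (RR l ρ₀ y)) ?_ (fun y hy => hdpp y hy)
    intro y hy
    apply ContinuousAt.continuousWithinAt
    have hmem := (h.RR_spec hl (hTr y hy)).1
    exact (h.qq_contAt hl (h.mem_of_gt_rm hmem)).comp (h.RR_contAt hl (hTr y hy))
  refine ⟨vv l ρ₀, hcd.mono hsub, ?_, ?_, ?_⟩
  · show yy l (RR l ρ₀ 0) = 1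
    rw [h.RR_zero hl, yy_one]
  · rw [hdW 0 self_mem_Ici, h.RR_zero hl, pp_one]
  · intro r hr
    have hrT : r ∈ T := hsub hr
    set ρ : ℝ := RR l ρ₀ r with hρdef
    have hmem := (h.RR_spec hl (hTr r hrT)).1
    have heq := (h.RR_spec hl (hTr r hrT)).2
    have hρ₀le : ρ₀ ≤ ρ := h.mem_of_gt_rm hmem
    -- LHS = qq l ρ
    have heven : deriv (vv l ρ₀) =ᶠ[nhds r] fun y => pp l (RR l ρ₀ y) := by
      filter_upwards [Ioi_mem_nhds (hTr r hrT)] with y hy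
      exact hdv y hy
    have hLHS : derivWithin (derivWithin (vv l ρ₀) (Ici 0)) (Ici 0) r = qq l ρ := by
      have e1 : derivWithin (derivWithin (vv l ρ₀) (Ici 0)) (Ici 0) r
          = derivWithin (deriv (vv l ρ₀)) (Ici 0) r := by
        apply derivWithin_congr
        · intro y hy
          rw [(h.vv_hasDeriv hl (hTr y (hsub hy))).differentiableAt.derivWithin
            (uniqueDiffOn_Ici 0 y hy)]
        · rw [(h.vv_hasDeriv hl (hTr r hrT)).differentiableAt.derivWithin
            (uniqueDiffOn_Ici 0 r hr)]
      rw [e1]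
      have hdiff2 : DifferentiableAt ℝ (deriv (vv l ρ₀)) r :=
        (h.ppRR_hasDeriv hl (hTr r hrT)).differentiableAt.congr_of_eventuallyEq heven
      rw [hdiff2.derivWithin (uniqueDiffOn_Ici 0 r hr)]
      rw [heven.deriv_eq]
      exact hdpp r hrT
    have e2 : derivWithin (vv l ρ₀) (Ici 0) r = pp l ρ := hdW r hr
    have e3 : vv l ρ₀ r = yy l ρ := rfl
    rw [hLHS, e2, e3, ← heq]
    exact h.main_id hl hρ₀le
end

section
/- Let R > 0 and let v be a positive differentiable function on (0,2R) that is continuous at 0 (i.e., lim_{r→0⁺} v(r) exists). Suppose there are a strictly decreasing sequence of positive numbers r_k → 0 and a constant c > 0 such that v(r_k) ≥ c·r_k and v(r_k) = max_{r∈[0,r_k]} v(r) for every k. If lim_{ε→0⁺} ∫_ε^R ((1+v'(r)^2)/(r^2+v(r)^2))^{1/2} dr < ∞, then lim_{r→0⁺} v(r) = δ for some δ > 0. -/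
open MeasureTheory Filter Set

/-- (Lemma `technical` of Chen–Warren.)
Let `v` be positive and differentiable on `(0, 2R)`, continuous at `0` (extended to `0`
by its limit).  Suppose there are a strictly decreasing sequence `r_k → 0` of positive
numbers (in `(0,2R)`) and `c > 0` with `v(r_k) ≥ c r_k` and `v(r_k) = max_{[0,r_k]} v`.
If `∫_0^R √((1+(v')²)/(r²+v²)) dr < ∞` then `lim_{r→0⁺} v(r) = δ` for some `δ > 0`. -/
theorem technical_lemma_positive_limit
    (R : ℝ) (hR : 0 < R) (v : ℝ → ℝ)
    (hpos : ∀ r ∈ Set.Ioo (0 : ℝ) (2 * R), 0 < v r)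
    (hdiff : ∀ r ∈ Set.Ioo (0 : ℝ) (2 * R), DifferentiableAt ℝ v r)
    (hcont : ContinuousWithinAt v (Set.Ici 0) 0)
    (rk : ℕ → ℝ) (hrk_pos : ∀ k, 0 < rk k) (hrk_mem : ∀ k, rk k < 2 * R)
    (hrk_anti : StrictAnti rk)
    (hrk_lim : Filter.Tendsto rk Filter.atTop (nhds 0))
    (c : ℝ) (hc : 0 < c)
    (hCC1 : ∀ k, c * rk k ≤ v (rk k))
    (hCC2 : ∀ k, ∀ r ∈ Set.Icc (0 : ℝ) (rk k), v r ≤ v (rk k))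
    (hint : MeasureTheory.IntegrableOn
      (fun r => Real.sqrt ((1 + (deriv v r) ^ 2) / (r ^ 2 + (v r) ^ 2)))
      (Set.Ioo 0 R)) :
    ∃ δ : ℝ, 0 < δ ∧ Filter.Tendsto v (nhdsWithin 0 (Set.Ioi 0)) (nhds δ) := by
  set f : ℝ → ℝ := fun r => Real.sqrt ((1 + (deriv v r) ^ 2) / (r ^ 2 + (v r) ^ 2)) with hf
  have hfnn : ∀ r, 0 ≤ f r := fun r => Real.sqrt_nonneg _
  have hlim : Tendsto v (nhdsWithin 0 (Set.Ici 0)) (nhds (v 0)) := hcont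
  -- v ∘ rk tends to v 0
  have hrk_Ici : Tendsto rk atTop (nhdsWithin 0 (Set.Ici 0)) :=
    tendsto_nhdsWithin_of_tendsto_nhds_of_eventually_within rk hrk_lim
      (Eventually.of_forall fun k => (hrk_pos k).le)
  have hvk : Tendsto (fun k => v (rk k)) atTop (nhds (v 0)) := hlim.comp hrk_Ici
  have hv0nn : 0 ≤ v 0 :=
    le_of_tendsto_of_tendsto' tendsto_const_nhds hvk fun k =>
      (hpos (rk k) ⟨hrk_pos k, hrk_mem k⟩).le
  refine ⟨v 0, ?_, hlim.mono_left (nhdsWithin_mono _ Set.Ioi_subset_Ici_self)⟩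
  by_contra hδ
  have hv00 : v 0 = 0 := le_antisymm (not_lt.mp hδ) hv0nn
  rw [hv00] at hvk
  -- positive constant K
  set C : ℝ := Real.sqrt (1 / c ^ 2 + 1) with hC
  have hCpos : 0 < C := Real.sqrt_pos.mpr (by positivity)
  set K : ℝ := 1 / (2 * C) with hK
  have hKpos : 0 < K := by positivity
  -- index with rk k < R eventually
  have hsmall : ∀ᶠ k in atTop, rk k < R :=
    hrk_lim.eventually (Filter.Tendsto.eventually_lt_const hR tendsto_id)
  -- main claim : K ≤ ∫_{Ioc 0 (rk k)} f for k with rk k < R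
  have claim : ∀ k, rk k < R → K ≤ ∫ r in Set.Ioc 0 (rk k), f r := by
    intro k hkR
    set b := rk k with hb
    have hb0 : 0 < b := hrk_pos k
    have hbmem : b ∈ Set.Ioo (0 : ℝ) (2 * R) := ⟨hb0, hrk_mem k⟩
    have hvb : 0 < v b := hpos b hbmem
    -- choose j with rk j < b and v (rk j) ≤ v b / 2
    have h1 : ∀ᶠ j in atTop, v (rk j) < v b / 2 :=
      hvk.eventually (Filter.Tendsto.eventually_lt_const (by linarith) tendsto_id)
    have h2 : ∀ᶠ j in atTop, rk j < b := by
      filter_upwards [eventually_gt_atTop k] with j hj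
      exact hrk_anti hj
    obtain ⟨j, hj1, hj2⟩ := (h1.and h2).exists
    set a := rk j with ha
    have ha0 : 0 < a := hrk_pos j
    have hab : a ≤ b := hj2.le
    -- M bound
    set M : ℝ := C * v b with hM
    have hMpos : 0 < M := mul_pos hCpos hvb
    have hsubIccR : Set.Icc a b ⊆ Set.Ioo (0 : ℝ) R := fun r hr =>
      ⟨lt_of_lt_of_le ha0 hr.1, lt_of_le_of_lt hr.2 hkR⟩
    have hsubIcc2R : Set.Icc a b ⊆ Set.Ioo (0 : ℝ) (2 * R) := fun r hr =>
      ⟨lt_of_lt_of_le ha0 hr.1, lt_of_le_of_lt hr.2 (hrk_mem k)⟩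
    -- pointwise bound |deriv v r| ≤ M * f r on Icc a b
    have hbound : ∀ r ∈ Set.Icc a b, |deriv v r| ≤ M * f r := by
      intro r hr
      have hr2R := hsubIcc2R hr
      have hvr : 0 < v r := hpos r hr2R
      have hvrb : v r ≤ v b := hCC2 k r ⟨hr2R.1.le, hr.2⟩
      have hd : (0:ℝ) < r ^ 2 + (v r) ^ 2 := by positivity
      have hdM : Real.sqrt (r ^ 2 + (v r) ^ 2) ≤ M := by
        rw [hM, hC, ← Real.sqrt_sq hvb.le, ← Real.sqrt_mul (by positivity)]
        apply Real.sqrt_le_sqrt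
        have hrb : r ≤ b := hr.2
        have hbv : b ≤ v b / c := by
          rw [le_div_iff₀ hc]; linarith [hCC1 k, mul_comm c b]
        have h3 : r ^ 2 ≤ (v b / c) ^ 2 := by
          apply sq_le_sq'
          · nlinarith [hr2R.1.le]
          · exact hrb.trans hbv
        have h4 : (v r) ^ 2 ≤ (v b) ^ 2 := by nlinarith
        have : (v b / c) ^ 2 = 1 / c ^ 2 * (v b) ^ 2 := by field_simp
        nlinarith [h3, h4]
      have key : f r * Real.sqrt (r ^ 2 + (v r) ^ 2) =
          Real.sqrt (1 + (deriv v r) ^ 2) := by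
        rw [hf, ← Real.sqrt_mul (by positivity), div_mul_cancel₀]
        exact hd.ne'
      have h5 : |deriv v r| ≤ Real.sqrt (1 + (deriv v r) ^ 2) := by
        rw [← Real.sqrt_sq_eq_abs]
        exact Real.sqrt_le_sqrt (by nlinarith)
      calc |deriv v r| ≤ Real.sqrt (1 + (deriv v r) ^ 2) := h5
        _ = f r * Real.sqrt (r ^ 2 + (v r) ^ 2) := key.symm
        _ ≤ f r * M := mul_le_mul_of_nonneg_left hdM (hfnn r)
        _ = M * f r := mul_comm _ _
    -- integrability
    have hfab : IntegrableOn f (Set.Icc a b) := hint.mono_set hsubIccR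
    have hder_int : IntegrableOn (deriv v) (Set.Icc a b) := by
      refine Integrable.mono' (hfab.const_mul M)
        ((measurable_deriv v).aestronglyMeasurable.restrict) ?_
      exact (ae_restrict_iff' measurableSet_Icc).mpr
        (Eventually.of_forall fun r hr => by
          simpa [Real.norm_eq_abs] using hbound r hr)
    have hii : IntervalIntegrable (deriv v) volume a b := by
      rw [intervalIntegrable_iff_integrableOn_Icc_of_le hab]; exact hder_int
    -- FTC
    have hftc : ∫ r in a..b, deriv v r = v b - v a := by
      apply intervalIntegral.integral_eq_sub_of_hasDerivAt
      · intro x hx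
        rw [Set.uIcc_of_le hab] at hx
        exact (hdiff x (hsubIcc2R hx)).hasDerivAt
      · exact hii
    have hfi0b : IntegrableOn f (Set.Ioc 0 b) :=
      hint.mono_set (fun r hr => ⟨hr.1, lt_of_le_of_lt hr.2 hkR⟩)
    -- chain of inequalities
    have habs_int : IntegrableOn (fun r => |deriv v r|) (Set.Ioc a b) :=
      (hder_int.mono_set Set.Ioc_subset_Icc_self).abs
    have step1 : v b - v a ≤ ∫ r in Set.Ioc a b, |deriv v r| := by
      rw [← hftc, ← intervalIntegral.integral_of_le hab]
      exact (le_abs_self _).trans (intervalIntegral.abs_integral_le_integral_abs hab)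
    have step2 : ∫ r in Set.Ioc a b, |deriv v r| ≤ ∫ r in Set.Ioc a b, M * f r := by
      apply setIntegral_mono_on habs_int
        ((hfab.mono_set Set.Ioc_subset_Icc_self).const_mul M) measurableSet_Ioc
      exact fun r hr => hbound r (Set.Ioc_subset_Icc_self hr)
    have step3 : ∫ r in Set.Ioc a b, M * f r = M * ∫ r in Set.Ioc a b, f r := by
      exact integral_const_mul M _
    have step4 : ∫ r in Set.Ioc a b, f r ≤ ∫ r in Set.Ioc 0 b, f r := by
      apply setIntegral_mono_set hfi0b (Eventually.of_forall hfnn)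
      exact HasSubset.Subset.eventuallyLE (Set.Ioc_subset_Ioc_left ha0.le)
    have hvb2 : v b / 2 ≤ v b - v a := by linarith [hj1]
    have hfin : v b / 2 ≤ M * ∫ r in Set.Ioc 0 b, f r := by
      calc v b / 2 ≤ v b - v a := hvb2
        _ ≤ ∫ r in Set.Ioc a b, |deriv v r| := step1
        _ ≤ ∫ r in Set.Ioc a b, M * f r := step2
        _ = M * ∫ r in Set.Ioc a b, f r := step3
        _ ≤ M * ∫ r in Set.Ioc 0 b, f r :=
            mul_le_mul_of_nonneg_left step4 hMpos.le
    -- conclude K ≤ integral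
    set I : ℝ := ∫ r in Set.Ioc 0 b, f r with hI
    have h7 : v b * (1/2) ≤ v b * (C * I) := by
      rw [hM] at hfin; ring_nf at hfin ⊢; linarith
    have h6 : (1:ℝ)/2 ≤ C * I := le_of_mul_le_mul_left h7 hvb
    rw [hK, div_le_iff₀ (by positivity)]
    calc (1:ℝ) ≤ 2 * (C * I) := by linarith
      _ = I * (2 * C) := by ring
  -- tail integrals tend to 0
  have hanti : Antitone (fun k => Set.Ioc (0:ℝ) (rk k)) := fun i j hij =>
    Set.Ioc_subset_Ioc_left (le_refl 0) |>.trans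
      (Set.Ioc_subset_Ioc le_rfl (hrk_anti.antitone hij))
  obtain ⟨k₀, hk₀⟩ := hsmall.exists
  have hIempty : (⋂ k, Set.Ioc (0:ℝ) (rk k)) = ∅ := by
    ext x
    simp only [Set.mem_iInter, Set.mem_Ioc, Set.mem_empty_iff_false, iff_false, not_forall]
    by_cases hx : 0 < x
    · obtain ⟨m, hm⟩ := (hrk_lim.eventually_lt_const hx).exists
      exact ⟨m, fun h => absurd h.2 (not_le.mpr hm)⟩
    · exact ⟨0, fun h => hx h.1⟩
  have hT : Tendsto (fun k => ∫ r in Set.Ioc 0 (rk k), f r) atTop (nhds 0) := by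
    have := tendsto_setIntegral_of_antitone (f := f) (μ := volume)
      (fun k => measurableSet_Ioc) hanti
      ⟨k₀, hint.mono_set (fun r hr => ⟨hr.1, lt_of_le_of_lt hr.2 hk₀⟩)⟩
    rwa [hIempty, Measure.restrict_empty, integral_zero_measure] at this
  have hev : ∀ᶠ k in atTop, (∫ r in Set.Ioc 0 (rk k), f r) < K :=
    hT.eventually (Filter.Tendsto.eventually_lt_const hKpos tendsto_id)
  obtain ⟨k, hk1, hk2⟩ := (hev.and hsmall).exists
  exact absurd (claim k hk2) (not_le.mpr hk1)
end

section
/- The function v(r) = 1/r (i.e., v = u' for the radial potential u(r) = ln r on ℝ^4∖{0}) satisfies the radial Hamiltonian stationary ODE with n = 4 and C = −4: for every r > 0, v''(r)/(1+v'(r)^2) + 3(r·v'(r) − v(r))/(r^2+v(r)^2) = −4·(1+v'(r)^2)^{1/2}/(r^2+v(r)^2)^{3/2}; explicitly, (2/r^3)/(1+1/r^4) + 3(−2/r)/(r^2+1/r^2) = −4·(1+1/r^4)^{1/2}/(r^2+1/r^2)^{3/2}, both sides equaling −4r/(r^4+1). Hence u(r) = ln r is a radial Hamiltonian stationary solution in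 dimension 4 that is not special Lagrangian. -/
/-! With `v = 1/r` one has `v' = -1/r²`, `v'' = 2/r³`, `1 + v'² = (r⁴+1)/r⁴` and
`r² + v² = (r⁴+1)/r²`, so both sides of the ODE are rational in `r` and `√(r⁴+1)`;
the square roots cancel and each side reduces to `-4r/(r⁴+1)`. -/

open Real

lemma deriv_one_div : deriv (fun x : ℝ => 1 / x) = fun x => -(x ^ 2)⁻¹ := by
  funext x
  simp only [one_div, deriv_inv]

lemma deriv_deriv_one_div {r : ℝ} (hr : r ≠ 0) :
    deriv (deriv fun x : ℝ => 1 / x) r = 2 / r ^ 3 := by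
  rw [deriv_one_div]
  have h : HasDerivAt (fun x : ℝ => -(x ^ 2)⁻¹) _ r :=
    ((hasDerivAt_pow 2 r).inv (pow_ne_zero 2 hr)).neg
  rw [h.deriv]
  field_simp
  ring

lemma sqrt_one_add_inv_sq_sq {r : ℝ} (hr : r ≠ 0) :
    √(1 + (-(r ^ 2)⁻¹) ^ 2) = √(r ^ 4 + 1) / r ^ 2 := by
  rw [show 1 + (-(r ^ 2)⁻¹) ^ 2 = (r ^ 4 + 1) / (r ^ 2) ^ 2 by field_simp,
    sqrt_div' _ (by positivity), sqrt_sq (by positivity)]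

lemma sqrt_sq_add_inv_sq_pow_three {r : ℝ} (hr : 0 < r) :
    √((r ^ 2 + (1 / r) ^ 2) ^ 3) = (r ^ 4 + 1) * √(r ^ 4 + 1) / r ^ 3 := by
  have hpos : (0 : ℝ) ≤ r ^ 4 + 1 := by positivity
  rw [show (r ^ 2 + (1 / r) ^ 2) ^ 3 = ((r ^ 4 + 1) ^ 2 * (r ^ 4 + 1)) / (r ^ 3) ^ 2 by
      field_simp,
    sqrt_div' _ (by positivity), sqrt_sq (pow_nonneg hr.le 3), sqrt_mul (by positivity), sqrt_sq hpos]

lemma one_div_ode_lhs {r : ℝ} (hr : r ≠ 0) :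
    2 / r ^ 3 / (1 + (-(r ^ 2)⁻¹) ^ 2) + 3 * (r * -(r ^ 2)⁻¹ - 1 / r) / (r ^ 2 + (1 / r) ^ 2)
      = -4 * r / (r ^ 4 + 1) := by
  have : r ^ 4 + 1 ≠ 0 := by positivity
  field_simp
  ring

lemma one_div_ode_rhs {r : ℝ} (hr : 0 < r) :
    -4 * √(1 + (-(r ^ 2)⁻¹) ^ 2) / √((r ^ 2 + (1 / r) ^ 2) ^ 3) = -4 * r / (r ^ 4 + 1) := by
  have : 0 < √(r ^ 4 + 1) := sqrt_pos.mpr (by positivity)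
  rw [sqrt_one_add_inv_sq_sq hr.ne', sqrt_sq_add_inv_sq_pow_three hr]
  field_simp

/-- The function `v(r) = 1/r` (i.e. `v = u'` for the radial potential
`u(r) = ln r` on `ℝ⁴ ∖ {0}`) satisfies the radial Hamiltonian stationary ODE with
`n = 4` and `C = −4`: for every `r > 0`,
`v''/(1+(v')²) + 3(r v' − v)/(r²+v²) = −4 √(1+(v')²)/(r²+v²)^{3/2}`,
both sides equaling `−4r/(r⁴+1)`.  Hence `u(r) = ln r` is a radial Hamiltonian
stationary solution in dimension 4 which is not special Lagrangian. -/
theorem u_eq_log_is_hamiltonian_stationary_dim_four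
    (v : ℝ → ℝ) (hv : v = fun r => 1 / r) :
    ∀ r : ℝ, 0 < r →
      (deriv (deriv v) r / (1 + (deriv v r) ^ 2)
          + 3 * (r * deriv v r - v r) / (r ^ 2 + (v r) ^ 2)
        = -4 * Real.sqrt (1 + (deriv v r) ^ 2)
            / Real.sqrt ((r ^ 2 + (v r) ^ 2) ^ 3)) ∧
      -4 * Real.sqrt (1 + (deriv v r) ^ 2) / Real.sqrt ((r ^ 2 + (v r) ^ 2) ^ 3)
        = -4 * r / (r ^ 4 + 1) := by
  subst hv
  intro r hr
  rw [deriv_deriv_one_div hr.ne', deriv_one_div]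
  exact ⟨(one_div_ode_lhs hr.ne').trans (one_div_ode_rhs hr).symm, one_div_ode_rhs hr⟩
end

section
/- Let θ₀ ∈ ℝ with sin θ₀ ≠ 0 and let β ∈ ℝ. Define v(r) = (r·cos θ₀ + (r^2+β)^{1/2})/sin θ₀ for those r > 0 with r^2 + β > 0. Then v is differentiable there with v'(r) = (cos θ₀ + r/(r^2+β)^{1/2})/sin θ₀, and v satisfies the radial special Lagrangian equation with constant phase θ₀ in dimension 2, in the form (1 − v(r)·v'(r)/r)·sin θ₀ + (v'(r) + v(r)/r)·cos θ₀ = 0 for all such r. (This gives the explicit family of all radial special Lagrangian solutions u with u' = v in dimension 2.) -/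
open Real

theorem hasDerivAt_sqrt_sq_add {β r : ℝ} (h : r ^ 2 + β ≠ 0) :
    HasDerivAt (fun x => √(x ^ 2 + β)) (r / √(r ^ 2 + β)) r := by
  have hpoly : HasDerivAt (fun x : ℝ => x ^ 2 + β) (2 * r) r := by
    simpa using (hasDerivAt_pow 2 r).add_const β
  convert hpoly.sqrt h using 1
  field_simp

theorem hasDerivAt_radial_profile (θ : ℝ) {β r : ℝ} (h : r ^ 2 + β ≠ 0) :
    HasDerivAt (fun x => (x * cos θ + √(x ^ 2 + β)) / sin θ)
      ((cos θ + r / √(r ^ 2 + β)) / sin θ) r :=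
  (((hasDerivAt_id r).mul_const (cos θ)).add (hasDerivAt_sqrt_sq_add h)).div_const (sin θ)
    |>.congr_deriv (by simp)

/- Multiplied by `r q sin θ`, the left side becomes `r q (sin² θ + cos² θ - 1)`; if `sin θ = 0`,
every term vanishes since `x / 0 = 0`. -/
theorem radial_special_lagrangian_dim_two_identity (θ : ℝ) {r q : ℝ} (hr : r ≠ 0) (hq : q ≠ 0) :
    (1 - (r * cos θ + q) / sin θ * ((cos θ + r / q) / sin θ) / r) * sin θ
      + ((cos θ + r / q) / sin θ + (r * cos θ + q) / sin θ / r) * cos θ = 0 := by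
  rcases eq_or_ne (sin θ) 0 with hs | hs
  · simp [hs]
  · field_simp
    linear_combination (r * q) * sin_sq_add_cos_sq θ

theorem explicit_radial_special_lagrangian_dim_two_general
    (θ₀ β : ℝ)
    (v : ℝ → ℝ)
    (hv : v = fun r => (r * Real.cos θ₀ + Real.sqrt (r ^ 2 + β)) / Real.sin θ₀) :
    ∀ r : ℝ, 0 < r → 0 < r ^ 2 + β →
      HasDerivAt v ((Real.cos θ₀ + r / Real.sqrt (r ^ 2 + β)) / Real.sin θ₀) r ∧
      (1 - v r * ((Real.cos θ₀ + r / Real.sqrt (r ^ 2 + β)) / Real.sin θ₀) / r)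
          * Real.sin θ₀
        + ((Real.cos θ₀ + r / Real.sqrt (r ^ 2 + β)) / Real.sin θ₀ + v r / r)
          * Real.cos θ₀ = 0 := by
  subst hv
  intro r hr hβ
  exact ⟨hasDerivAt_radial_profile θ₀ hβ.ne',
    radial_special_lagrangian_dim_two_identity θ₀ hr.ne' (sqrt_pos.2 hβ).ne'⟩

/-- (Explicit radial special Lagrangian solutions in dimension 2,
Remark after Proposition `prop1` of Chen–Warren.)
For `sin θ₀ ≠ 0` and `β ∈ ℝ`, the function `v(r) = (r cos θ₀ + √(r²+β))/sin θ₀`,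
defined for `r > 0` with `r² + β > 0`, is differentiable with
`v'(r) = (cos θ₀ + r/√(r²+β))/sin θ₀` and satisfies the radial special Lagrangian
equation with constant phase `θ₀`:
`(1 − v v'/r) sin θ₀ + (v' + v/r) cos θ₀ = 0`. -/
theorem explicit_radial_special_lagrangian_dim_two
    (θ₀ β : ℝ) (hθ : Real.sin θ₀ ≠ 0)
    (v : ℝ → ℝ)
    (hv : v = fun r => (r * Real.cos θ₀ + Real.sqrt (r ^ 2 + β)) / Real.sin θ₀) :
    ∀ r : ℝ, 0 < r → 0 < r ^ 2 + β →
      HasDerivAt v ((Real.cos θ₀ + r / Real.sqrt (r ^ 2 + β)) / Real.sin θ₀) r ∧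
      (1 - v r * ((Real.cos θ₀ + r / Real.sqrt (r ^ 2 + β)) / Real.sin θ₀) / r)
          * Real.sin θ₀
        + ((Real.cos θ₀ + r / Real.sqrt (r ^ 2 + β)) / Real.sin θ₀ + v r / r)
          * Real.cos θ₀ = 0 :=
  explicit_radial_special_lagrangian_dim_two_general θ₀ β v hv
end

section
/- Let n ≥ 2 be an integer, C > 0, r₀ > 0, and let v be twice differentiable at r₀ and satisfy at r = r₀ the radial Hamiltonian stationary ODE v''/(1+(v')^2) + (n−1)(r·v' − v)/(r^2+v^2) = C·(1+(v')^2)^{1/2}/(r^2+v^2)^{(n−1)/2}. If v'(r₀) = 0 and v(r₀) ≥ 0, then v''(r₀) > 0. In particular, a solution with C > 0 cannot attain a nonnegative local maximum. -/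
/-- (No nonnegative local maximum, from the proof of Corollary
`initial` of Chen–Warren.)  If `v` is twice differentiable at `r₀ > 0` and satisfies
there the radial Hamiltonian stationary ODE with `C > 0`, and if `v'(r₀) = 0` and
`v(r₀) ≥ 0`, then `v''(r₀) > 0`; in particular a solution with `C > 0` cannot attain
a nonnegative local maximum. -/
theorem no_nonnegative_local_max
    (n : ℕ) (hn : 2 ≤ n) (C r₀ : ℝ) (hC : 0 < C) (hr₀ : 0 < r₀)
    (v : ℝ → ℝ)
    (hdiff : DifferentiableAt ℝ v r₀)
    (hdiff2 : DifferentiableAt ℝ (deriv v) r₀)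
    (hode : deriv (deriv v) r₀ / (1 + (deriv v r₀) ^ 2)
        + ((n : ℝ) - 1) * (r₀ * deriv v r₀ - v r₀) / (r₀ ^ 2 + (v r₀) ^ 2)
        = C * Real.sqrt (1 + (deriv v r₀) ^ 2)
            / Real.sqrt ((r₀ ^ 2 + (v r₀) ^ 2) ^ (n - 1)))
    (hv' : deriv v r₀ = 0) (hv0 : 0 ≤ v r₀) :
    0 < deriv (deriv v) r₀ := by
  have hD : (0:ℝ) < r₀ ^ 2 + (v r₀) ^ 2 := by positivity
  rw [hv'] at hode
  simp only [ne_eq, zero_pow, mul_zero, zero_sub] at hode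
  norm_num at hode
  have hs : 0 < Real.sqrt ((r₀ ^ 2 + v r₀ ^ 2) ^ (n - 1)) :=
    Real.sqrt_pos.2 (by positivity)
  have h1 : 0 < C / Real.sqrt ((r₀ ^ 2 + v r₀ ^ 2) ^ (n - 1)) := by positivity
  have h2 : 0 ≤ ((n : ℝ) - 1) * v r₀ / (r₀ ^ 2 + v r₀ ^ 2) := by
    have : (1:ℝ) ≤ (n:ℝ) := by exact_mod_cast Nat.one_le_of_lt hn
    have : 0 ≤ (n:ℝ) - 1 := by linarith
    positivity
  rw [neg_div] at hode
  linarith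
end

section
/- Let C > 0 and t₀ > 0, and let v be twice differentiable at t₀ satisfying at r = t₀ the radial Hamiltonian stationary ODE with n = 2: v''/(1+(v')^2) + (r·v' − v)/(r^2+v^2) = C·(1+(v')^2)^{1/2}/(r^2+v^2)^{1/2}. If v'(t₀) = 0 and v''(t₀) ≤ 0, then v(t₀) < 0, C < 1, and |v(t₀)| ≥ C·t₀/(1−C^2)^{1/2}. -/
/-- (From the `n = 2` case in the proof of Corollary `initial`
of Chen–Warren.)  Let `C > 0`, `t₀ > 0`, and let `v` be twice differentiable at `t₀`
satisfying there the radial Hamiltonian stationary ODE with `n = 2`.  If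
`v'(t₀) = 0` and `v''(t₀) ≤ 0`, then `v(t₀) < 0`, `C < 1`, and
`|v(t₀)| ≥ C t₀ / √(1−C²)`. -/
theorem critical_point_lower_bound_dim_two
    (C t₀ : ℝ) (hC : 0 < C) (ht₀ : 0 < t₀)
    (v : ℝ → ℝ)
    (hdiff : DifferentiableAt ℝ v t₀)
    (hdiff2 : DifferentiableAt ℝ (deriv v) t₀)
    (hode : deriv (deriv v) t₀ / (1 + (deriv v t₀) ^ 2)
        + (t₀ * deriv v t₀ - v t₀) / (t₀ ^ 2 + (v t₀) ^ 2)
        = C * Real.sqrt (1 + (deriv v t₀) ^ 2) / Real.sqrt (t₀ ^ 2 + (v t₀) ^ 2))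
    (hv' : deriv v t₀ = 0) (hv'' : deriv (deriv v) t₀ ≤ 0) :
    v t₀ < 0 ∧ C < 1 ∧ C * t₀ / Real.sqrt (1 - C ^ 2) ≤ |v t₀| := by
  set V := v t₀ with hV
  have hq : (0:ℝ) < t₀ ^ 2 + V ^ 2 := by positivity
  set s := Real.sqrt (t₀ ^ 2 + V ^ 2) with hs
  have hs0 : 0 < s := Real.sqrt_pos.mpr hq
  have hs2 : s ^ 2 = t₀ ^ 2 + V ^ 2 := Real.sq_sqrt hq.le
  rw [hv'] at hode
  norm_num at hode
  -- hode : v'' - V/(t₀²+V²) = C / s    (roughly)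
  have h1 : C / s + V / (t₀ ^ 2 + V ^ 2) ≤ 0 := by
    have : C / s + V / (t₀ ^ 2 + V ^ 2) = deriv (deriv v) t₀ := by
      rw [← hode]; ring
    linarith [this ▸ hv'']
  have e1 : C / s * s ^ 2 = C * s := by
    rw [sq]; field_simp
  have e2 : V / (t₀ ^ 2 + V ^ 2) * s ^ 2 = V := by
    rw [hs2]; field_simp
  have key : V + C * s ≤ 0 := by
    have h2 : (C / s + V / (t₀ ^ 2 + V ^ 2)) * s ^ 2 = V + C * s := by
      rw [add_mul, e1, e2]; ring
    have := mul_nonpos_of_nonpos_of_nonneg h1 (sq_nonneg s)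
    linarith [h2 ▸ this]
  have hst : t₀ ≤ s := by
    nlinarith [sq_nonneg V]
  have hVneg : V < 0 := by nlinarith
  have hCsV : C * s ≤ -V := by linarith
  have h3 : (C * s) ^ 2 ≤ (-V) ^ 2 :=
    pow_le_pow_left₀ (by positivity) hCsV 2
  have hV2 : C ^ 2 * (t₀ ^ 2 + V ^ 2) ≤ V ^ 2 := by
    have : C ^ 2 * s ^ 2 ≤ V ^ 2 := by nlinarith [h3]
    rw [hs2] at this; exact this
  have hC1 : C < 1 := by
    by_contra h
    push_neg at h
    have hC2 : 1 ≤ C ^ 2 := by nlinarith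
    have := mul_le_mul_of_nonneg_right hC2 (by positivity : (0:ℝ) ≤ t₀ ^ 2 + V ^ 2)
    nlinarith [sq_nonneg t₀]
  have h1C : 0 < 1 - C ^ 2 := by nlinarith
  set w := Real.sqrt (1 - C ^ 2) with hw
  have hw0 : 0 < w := Real.sqrt_pos.mpr h1C
  have hw2 : w ^ 2 = 1 - C ^ 2 := Real.sq_sqrt h1C.le
  refine ⟨hVneg, hC1, ?_⟩
  rw [abs_of_neg hVneg, div_le_iff₀ hw0]
  have hsq : (C * t₀) ^ 2 ≤ (-V * w) ^ 2 := by nlinarith [hw2, hV2]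
  have := (pow_le_pow_iff_left₀ (by positivity : (0:ℝ) ≤ C * t₀)
    (mul_nonneg (neg_nonneg.mpr hVneg.le) hw0.le) (by norm_num : 2 ≠ 0)).mp hsq
  linarith
end

section
/- Let n ≥ 2 be an integer, C > 0, and let v be twice continuously differentiable on (a,b) ⊆ (0,∞) satisfying the radial Hamiltonian stationary ODE v''(r)/(1+v'(r)^2) + (n−1)(r·v'(r) − v(r))/(r^2+v(r)^2) = C·(1+v'(r)^2)^{1/2}/(r^2+v(r)^2)^{(n−1)/2} on (a,b). If t₀ ∈ (a,b) with v(t₀) > 0 and v'(t₀) > 0, then v'(r) > 0 for all r ∈ [t₀, b); in particular v is strictly increasing on [t₀, b). -/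
/-!
Let `s` be the first point of `[t₀, b)` at which `v'` fails to be positive. Then `v' s = 0`, and
`v` increases on `[t₀, s]`, so `v s > 0`. At such a point the ODE reads
`v'' s = (n - 1) v s / (s² + v s²) + C / (s² + v s²)^((n-1)/2) > 0`, whereas `v'` decreasing to
`0` from positive values forces `v'' s ≤ 0`.
-/

open Set

def RadialHamiltonianStationaryAt (n : ℕ) (C : ℝ) (v : ℝ → ℝ) (r : ℝ) : Prop :=
  deriv (deriv v) r / (1 + (deriv v r) ^ 2)
      + ((n : ℝ) - 1) * (r * deriv v r - v r) / (r ^ 2 + (v r) ^ 2)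
    = C * Real.sqrt (1 + (deriv v r) ^ 2) / Real.sqrt ((r ^ 2 + (v r) ^ 2) ^ (n - 1))

theorem RadialHamiltonianStationaryAt.deriv_deriv_pos {n : ℕ} {C : ℝ} {v : ℝ → ℝ} {r : ℝ}
    (hode : RadialHamiltonianStationaryAt n C v r) (hn : 1 ≤ n) (hC : 0 < C)
    (hv : 0 < v r) (hv' : deriv v r = 0) : 0 < deriv (deriv v) r := by
  unfold RadialHamiltonianStationaryAt at hode
  rw [hv'] at hode
  have hn' : (1 : ℝ) ≤ n := by exact_mod_cast hn
  have hden : 0 < r ^ 2 + v r ^ 2 := by positivity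
  have hforcing : 0 < C / Real.sqrt ((r ^ 2 + v r ^ 2) ^ (n - 1)) := by positivity
  have hangular : 0 ≤ ((n : ℝ) - 1) * v r / (r ^ 2 + v r ^ 2) := by
    have : (0 : ℝ) ≤ n - 1 := by linarith
    positivity
  have : deriv (deriv v) r
      = ((n : ℝ) - 1) * v r / (r ^ 2 + v r ^ 2) + C / Real.sqrt ((r ^ 2 + v r ^ 2) ^ (n - 1)) := by
    simp only [ne_eq, OfNat.ofNat_ne_zero, not_false_eq_true, zero_pow, add_zero, div_one,
      Real.sqrt_one, mul_one, mul_zero, zero_sub] at hode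
    rw [← hode]; ring
  linarith

theorem exists_first_zero_of_pos_of_nonpos {f : ℝ → ℝ} {a b : ℝ} (hab : a ≤ b)
    (hf : ContinuousOn f (Icc a b)) (ha : 0 < f a) (hb : f b ≤ 0) :
    ∃ s ∈ Ioc a b, f s = 0 ∧ ∀ x ∈ Ico a s, 0 < f x := by
  have hclosed : IsClosed (Icc a b ∩ f ⁻¹' Iic 0) :=
    hf.preimage_isClosed_of_isClosed isClosed_Icc isClosed_Iic
  obtain ⟨s, ⟨hs, hfs⟩, hleast⟩ := (isCompact_Icc.of_isClosed_subset hclosed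
    inter_subset_left).exists_isLeast ⟨b, ⟨hab, le_rfl⟩, hb⟩
  have hpos : ∀ x ∈ Ico a s, 0 < f x := fun x hx =>
    lt_of_not_ge fun hfx => (hleast ⟨⟨hx.1, hx.2.le.trans hs.2⟩, hfx⟩).not_gt hx.2
  have has : a < s := hs.1.lt_of_ne (by rintro rfl; exact hfs.not_gt ha)
  refine ⟨s, ⟨has, hs.2⟩, le_antisymm hfs ?_, hpos⟩
  by_contra! hneg
  obtain ⟨c, hc, hfc⟩ :=
    intermediate_value_Icc' has.le (hf.mono (Icc_subset_Icc_right hs.2)) ⟨hneg.le, ha.le⟩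
  exact (hpos c ⟨hc.1, hc.2.lt_of_ne (by rintro rfl; exact hneg.ne hfc)⟩).ne' hfc

theorem HasDerivAt.nonpos_of_isMinOn_Icc {f : ℝ → ℝ} {f' a b : ℝ} (hab : a < b)
    (hf : HasDerivAt f f' b) (hmin : IsMinOn f (Icc a b) b) : f' ≤ 0 := by
  have hcone : a - b ∈ posTangentConeAt (Icc a b) b :=
    sub_mem_posTangentConeAt_of_segment_subset (by rw [segment_symm, segment_eq_Icc hab.le])
  have := hmin.localize.hasFDerivWithinAt_nonneg hf.hasFDerivAt.hasFDerivWithinAt hcone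
  simp only [ContinuousLinearMap.toSpanSingleton_apply, smul_eq_mul] at this
  nlinarith

theorem derivative_stays_positive_general
    (n : ℕ) (hn : 2 ≤ n) (C a b : ℝ) (hC : 0 < C)
    (v : ℝ → ℝ) (hv : ContDiffOn ℝ 2 v (Set.Ioo a b))
    (hode : ∀ r ∈ Set.Ioo a b,
      deriv (deriv v) r / (1 + (deriv v r) ^ 2)
        + ((n : ℝ) - 1) * (r * deriv v r - v r) / (r ^ 2 + (v r) ^ 2)
        = C * Real.sqrt (1 + (deriv v r) ^ 2)
            / Real.sqrt ((r ^ 2 + (v r) ^ 2) ^ (n - 1)))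
    (t₀ : ℝ) (ht₀ : t₀ ∈ Set.Ioo a b) (hvt : 0 < v t₀) (hv't : 0 < deriv v t₀) :
    (∀ r ∈ Set.Ico t₀ b, 0 < deriv v r) ∧ StrictMonoOn v (Set.Ico t₀ b) := by
  have hv' : ContDiffOn ℝ 1 (deriv v) (Ioo a b) := hv.deriv_of_isOpen isOpen_Ioo (by norm_num)
  have hsub : ∀ {x}, t₀ ≤ x → x < b → x ∈ Ioo a b := fun h₁ h₂ => ⟨ht₀.1.trans_le h₁, h₂⟩
  have hpos : ∀ r ∈ Ico t₀ b, 0 < deriv v r := by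
    by_contra! ⟨r₀, hr₀, hvr₀⟩
    obtain ⟨s, hs, hv's, hpos⟩ := exists_first_zero_of_pos_of_nonpos hr₀.1
      (hv'.continuousOn.mono fun x hx => hsub hx.1 (hx.2.trans_lt hr₀.2)) hv't hvr₀
    have hsab : s ∈ Ioo a b := hsub hs.1.le (hs.2.trans_lt hr₀.2)
    have hvs : 0 < v s := by
      have hmono : StrictMonoOn v (Icc t₀ s) :=
        strictMonoOn_of_deriv_pos (convex_Icc _ _)
          (hv.continuousOn.mono fun x hx => hsub hx.1 (hx.2.trans_lt hsab.2))
          fun x hx => hpos x (Ioo_subset_Ico_self (by rwa [interior_Icc] at hx))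
      exact hvt.trans (hmono (left_mem_Icc.2 hs.1.le) (right_mem_Icc.2 hs.1.le) hs.1)
    have hconvex : 0 < deriv (deriv v) s :=
      RadialHamiltonianStationaryAt.deriv_deriv_pos (hode s hsab) (by omega) hC hvs hv's
    have hconcave : deriv (deriv v) s ≤ 0 := by
      have hmin : IsMinOn (deriv v) (Icc t₀ s) s := isMinOn_iff.2 fun x hx => by
        rcases hx.2.lt_or_eq with hxs | rfl
        exacts [hv's.trans_le (hpos x ⟨hx.1, hxs⟩).le, le_rfl]
      exact HasDerivAt.nonpos_of_isMinOn_Icc hs.1 ((hv'.differentiableOn one_ne_zero)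
        |>.differentiableAt (isOpen_Ioo.mem_nhds hsab)).hasDerivAt hmin
    exact hconcave.not_gt hconvex
  refine ⟨hpos, strictMonoOn_of_deriv_pos (convex_Ico _ _)
    (hv.continuousOn.mono fun x hx => hsub hx.1 hx.2) fun x hx => ?_⟩
  rw [interior_Ico] at hx
  exact hpos x (Ioo_subset_Ico_self hx)

/-- (From the proofs of Proposition `prop41` and Corollary `initial`
of Chen–Warren.)  Let `C > 0` and let `v` be a C² solution on `(a,b) ⊆ (0,∞)` of the
radial Hamiltonian stationary ODE.  If `v(t₀) > 0` and `v'(t₀) > 0` at some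
`t₀ ∈ (a,b)`, then `v' > 0` on `[t₀, b)`; in particular `v` is strictly increasing
on `[t₀, b)`. -/
theorem derivative_stays_positive
    (n : ℕ) (hn : 2 ≤ n) (C a b : ℝ) (hC : 0 < C) (ha : 0 ≤ a) (hab : a < b)
    (v : ℝ → ℝ) (hv : ContDiffOn ℝ 2 v (Set.Ioo a b))
    (hode : ∀ r ∈ Set.Ioo a b,
      deriv (deriv v) r / (1 + (deriv v r) ^ 2)
        + ((n : ℝ) - 1) * (r * deriv v r - v r) / (r ^ 2 + (v r) ^ 2)
        = C * Real.sqrt (1 + (deriv v r) ^ 2)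
            / Real.sqrt ((r ^ 2 + (v r) ^ 2) ^ (n - 1)))
    (t₀ : ℝ) (ht₀ : t₀ ∈ Set.Ioo a b) (hvt : 0 < v t₀) (hv't : 0 < deriv v t₀) :
    (∀ r ∈ Set.Ico t₀ b, 0 < deriv v r) ∧ StrictMonoOn v (Set.Ico t₀ b) :=
  derivative_stays_positive_general n hn C a b hC v hv hode t₀ ht₀ hvt hv't
end

section
/- Let λ ≥ 2 be real, T ∈ (0,∞], and let v : [0,T) → ℝ be twice continuously differentiable with v(0) = 1, v'(0) = 1, satisfying for all r ∈ [0,T): v''(r) = −λ·[ (1+v'(r)^2)^{1/2}/(r^2+v(r)^2)^{λ/2} + (r·v'(r) − v(r))/(r^2+v(r)^2) ]·(1+v'(r)^2). Then v(r) ≥ 1 and v'(r) > 0 for all r ∈ [0,T). -/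
/-!
Suppose `v'` vanishes somewhere and let `c` be its first zero. On `[0, c]` the function `v` is
strictly increasing, so `v c > 1` and `s := c² + v(c)² > 1`. With `v' c = 0` the equation reads
`v'' c = -λ (s^{-λ/2} - v(c)/s)`, and `s^{λ/2} ≥ s` (as `λ ≥ 2`) makes this positive. But `v'`
decreases to `0` at its first zero, so `v'' c ≤ 0`.
-/

open Set Topology

/-- The right-hand side `G_λ(r, v, p)` of the radial equation `v'' = G_λ(r, v, v')`. -/
noncomputable def radialRHS (l r v p : ℝ) : ℝ :=
  -l * (Real.sqrt (1 + p ^ 2) / (r ^ 2 + v ^ 2) ^ (l / 2) + (r * p - v) / (r ^ 2 + v ^ 2)) *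
    (1 + p ^ 2)

theorem radialRHS_zero_pos {l r v : ℝ} (hl : 2 ≤ l) (hv : 1 < v) : 0 < radialRHS l r v 0 := by
  set s := r ^ 2 + v ^ 2
  have hs : 1 < s := by nlinarith [sq_nonneg r, show s = r ^ 2 + v ^ 2 from rfl]
  have hs_le_rpow : s ≤ s ^ (l / 2) := by
    simpa using Real.rpow_le_rpow_of_exponent_le hs.le (by linarith : (1 : ℝ) ≤ l / 2)
  have hbracket : 1 / s ^ (l / 2) - v / s < 0 := by
    have h₁ : 1 / s ^ (l / 2) ≤ 1 / s := one_div_le_one_div_of_le (by linarith) hs_le_rpow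
    have h₂ : 1 / s < v / s := div_lt_div_of_pos_right hv (by linarith)
    linarith
  have hrhs : radialRHS l r v 0 = -l * (1 / s ^ (l / 2) - v / s) := by
    simp only [radialRHS, s]
    norm_num [neg_div, sub_eq_add_neg]
  rw [hrhs]
  exact mul_pos_of_neg_of_neg (by linarith) hbracket

theorem exists_first_zero_of_continuousOn {g : ℝ → ℝ} {a b : ℝ} (hab : a ≤ b)
    (hg : ContinuousOn g (Icc a b)) (ha : 0 < g a) (hb : g b ≤ 0) :
    ∃ c ∈ Ioc a b, g c = 0 ∧ ∀ x ∈ Ico a c, 0 < g x := by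
  set S := Icc a b ∩ g ⁻¹' Iic 0
  have hS : IsClosed S := hg.preimage_isClosed_of_isClosed isClosed_Icc isClosed_Iic
  have hSne : S.Nonempty := ⟨b, right_mem_Icc.2 hab, hb⟩
  have hSbdd : BddBelow S := ⟨a, fun x hx => hx.1.1⟩
  obtain ⟨⟨hac, hcb⟩, hc⟩ := hS.csInf_mem hSne hSbdd
  set c := sInf S
  have hpos : ∀ x ∈ Ico a c, 0 < g x := fun x hx => by
    by_contra! hx'
    exact (csInf_le hSbdd ⟨⟨hx.1, hx.2.le.trans hcb⟩, hx'⟩).not_gt hx.2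
  obtain ⟨z, hz, hgz⟩ :=
    intermediate_value_Icc' hac (hg.mono (Icc_subset_Icc_right hcb)) ⟨hc, ha.le⟩
  have hzc : z = c :=
    le_antisymm hz.2 (csInf_le hSbdd ⟨⟨hz.1, hz.2.trans hcb⟩, hgz.le⟩)
  have hac' : a < c := hac.lt_of_ne fun h => (h ▸ ha).not_ge hc
  exact ⟨c, ⟨hac', hcb⟩, hzc ▸ hgz, hpos⟩

theorem HasDerivWithinAt.nonpos_of_first_zero {g : ℝ → ℝ} {g' a c : ℝ} (hac : a < c)
    (hg : HasDerivWithinAt g g' (Icc a c) c) (hc : g c = 0) (hpos : ∀ x ∈ Ico a c, 0 < g x) :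
    g' ≤ 0 := by
  rw [hasDerivWithinAt_iff_tendsto_slope, Icc_sdiff_right] at hg
  have : (𝓝[Ico a c] c).NeBot := right_nhdsWithin_Ico_neBot hac
  refine le_of_tendsto hg (eventually_nhdsWithin_of_forall fun x hx => ?_)
  rw [slope_def_field, hc, sub_zero]
  exact div_nonpos_of_nonneg_of_nonpos (hpos x hx).le (by linarith [hx.2])

theorem strictMonoOn_Icc_of_hasDerivWithinAt_pos {f f' : ℝ → ℝ} {s : Set ℝ} {a b : ℝ}
    (hsub : Icc a b ⊆ s) (hf : ∀ x ∈ Icc a b, HasDerivWithinAt f (f' x) s x)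
    (hpos : ∀ x ∈ Ioo a b, 0 < f' x) : StrictMonoOn f (Icc a b) := by
  refine strictMonoOn_of_hasDerivWithinAt_pos (convex_Icc a b)
    (fun x hx => (hf x hx).continuousWithinAt.mono hsub)
    (fun x hx => (hf x (interior_subset hx)).mono (interior_subset.trans hsub)) ?_
  rwa [interior_Icc]

theorem solution_stays_increasing_general
    (l : ℝ) (hl : 2 ≤ l) (T : EReal)
    (v v' v'' : ℝ → ℝ)
    (I : Set ℝ) (hI : I = {r : ℝ | 0 ≤ r ∧ (r : EReal) < T})
    (hd1 : ∀ r ∈ I, HasDerivWithinAt v (v' r) I r)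
    (hd2 : ∀ r ∈ I, HasDerivWithinAt v' (v'' r) I r)
    (h0 : v 0 = 1) (h0' : v' 0 = 1)
    (hode : ∀ r ∈ I, v'' r
      = -l * (Real.sqrt (1 + (v' r) ^ 2) / (r ^ 2 + (v r) ^ 2) ^ (l / 2)
            + (r * v' r - v r) / (r ^ 2 + (v r) ^ 2)) * (1 + (v' r) ^ 2)) :
    ∀ r ∈ I, 1 ≤ v r ∧ 0 < v' r := by
  have hIcc : ∀ r ∈ I, Icc 0 r ⊆ I := fun r hr x hx => by
    subst hI
    exact ⟨hx.1, (EReal.coe_le_coe_iff.2 hx.2).trans_lt hr.2⟩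
  have hnonneg : ∀ r ∈ I, 0 ≤ r := fun r hr => by subst hI; exact hr.1
  have hv_gt : ∀ r ∈ I, 0 < r → (∀ x ∈ Ioo 0 r, 0 < v' x) → 1 < v r := fun r hr hr₀ hpos => by
    have := strictMonoOn_Icc_of_hasDerivWithinAt_pos (hIcc r hr)
      (fun x hx => hd1 x (hIcc r hr hx)) hpos (left_mem_Icc.2 hr₀.le) (right_mem_Icc.2 hr₀.le) hr₀
    rwa [h0] at this
  have hv'_pos : ∀ r ∈ I, 0 < v' r := by
    by_contra! ⟨a, haI, ha⟩
    obtain ⟨c, ⟨hc₀, hca⟩, hc, hpos⟩ := exists_first_zero_of_continuousOn (hnonneg a haI)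
      (fun x hx => (hd2 x (hIcc a haI hx)).continuousWithinAt.mono (hIcc a haI)) (h0' ▸ one_pos) ha
    have hcI : c ∈ I := hIcc a haI ⟨hc₀.le, hca⟩
    have hv''_nonpos : v'' c ≤ 0 :=
      ((hd2 c hcI).mono (hIcc c hcI)).nonpos_of_first_zero hc₀ hc hpos
    have hv''_pos : 0 < v'' c := by
      rw [hode c hcI, hc]
      exact radialRHS_zero_pos hl (hv_gt c hcI hc₀ fun x hx => hpos x (Ioo_subset_Ico_self hx))
    linarith
  intro r hr
  refine ⟨?_, hv'_pos r hr⟩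
  rcases (hnonneg r hr).eq_or_lt with rfl | hr₀
  · exact h0.ge
  · exact (hv_gt r hr hr₀ fun x hx => hv'_pos x (hIcc r hr (Ioo_subset_Icc_self hx))).le

/-- (First claim in the proof of Proposition `prop41` of
Chen–Warren.)  Let `λ ≥ 2`, `T ∈ (0,∞]`, and let `v : [0,T) → ℝ` be twice
continuously differentiable with `v(0) = 1`, `v'(0) = 1`, satisfying
`v'' = −λ [√(1+(v')²)/(r²+v²)^{λ/2} + (r v' − v)/(r²+v²)] (1+(v')²)` on `[0,T)`.
Then `v ≥ 1` and `v' > 0` on `[0,T)`. -/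
theorem solution_stays_increasing
    (l : ℝ) (hl : 2 ≤ l) (T : EReal) (hT : 0 < T)
    (v v' v'' : ℝ → ℝ)
    (I : Set ℝ) (hI : I = {r : ℝ | 0 ≤ r ∧ (r : EReal) < T})
    (hd1 : ∀ r ∈ I, HasDerivWithinAt v (v' r) I r)
    (hd2 : ∀ r ∈ I, HasDerivWithinAt v' (v'' r) I r)
    (hc : ContinuousOn v'' I)
    (h0 : v 0 = 1) (h0' : v' 0 = 1)
    (hode : ∀ r ∈ I, v'' r
      = -l * (Real.sqrt (1 + (v' r) ^ 2) / (r ^ 2 + (v r) ^ 2) ^ (l / 2)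
            + (r * v' r - v r) / (r ^ 2 + (v r) ^ 2)) * (1 + (v' r) ^ 2)) :
    ∀ r ∈ I, 1 ≤ v r ∧ 0 < v' r :=
  solution_stays_increasing_general l hl T v v' v'' I hI hd1 hd2 h0 h0' hode
end

section
/- Let n ≥ 2 be an integer, R > 0, C ≠ 0, and let v : (0,R) → ℝ be continuously differentiable and bounded, such that the phase θ(r) = arctan(v'(r)) + (n−1)·arctan(v(r)/r) is differentiable on (0,R) with θ'(r) = C·((1+v'(r)^2)/(r^2+v(r)^2)^{n−1})^{1/2}. Then lim_{ε→0⁺} ∫_ε^R ((1+v'(r)^2)/(r^2+v(r)^2))^{1/2} dr < ∞, i.e., ((1+(v')^2)/(r^2+v^2))^{1/2} is integrable near r = 0. -/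
open Set MeasureTheory Filter

/-- (Finiteness of the improper integral, from the proof of
Corollary `initial` of Chen–Warren.)  Let `n ≥ 2`, `R > 0`, `C ≠ 0`, and let `v` be
C¹ and bounded on `(0,R)` with phase `θ(r) = arctan v'(r) + (n−1) arctan (v(r)/r)`
satisfying `θ'(r) = C √((1+(v')²)/(r²+v²)^{n−1})` on `(0,R)`.  Then
`lim_{ε→0⁺} ∫_ε^R √((1+(v')²)/(r²+v²)) dr < ∞`, i.e. `√((1+(v')²)/(r²+v²))` is
integrable near `r = 0`. -/
theorem integrand_integrable_near_origin
    (n : ℕ) (hn : 2 ≤ n) (R C : ℝ) (hR : 0 < R) (hC : C ≠ 0)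
    (v : ℝ → ℝ) (hv : ContDiffOn ℝ 1 v (Set.Ioo 0 R))
    (hbdd : ∃ M : ℝ, ∀ r ∈ Set.Ioo (0 : ℝ) R, |v r| ≤ M)
    (θ : ℝ → ℝ)
    (hθ : θ = fun r => Real.arctan (deriv v r) + ((n : ℝ) - 1) * Real.arctan (v r / r))
    (hode : ∀ r ∈ Set.Ioo (0 : ℝ) R, HasDerivAt θ
      (C * Real.sqrt ((1 + (deriv v r) ^ 2) / (r ^ 2 + (v r) ^ 2) ^ (n - 1))) r) :
    MeasureTheory.IntegrableOn
      (fun r => Real.sqrt ((1 + (deriv v r) ^ 2) / (r ^ 2 + (v r) ^ 2)))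
      (Set.Ioo 0 R) := by
  obtain ⟨M, hM⟩ := hbdd
  set M' : ℝ := |M| with hM'
  have hM'0 : 0 ≤ M' := abs_nonneg _
  have hMle : ∀ r ∈ Set.Ioo (0 : ℝ) R, |v r| ≤ M' := fun r hr =>
    (hM r hr).trans (le_abs_self M)
  -- positivity facts
  have hD : ∀ r ∈ Set.Ioo (0 : ℝ) R, (0:ℝ) < r ^ 2 + (v r) ^ 2 := fun r hr =>
    add_pos_of_pos_of_nonneg (pow_pos hr.1 2) (sq_nonneg _)
  have hA : ∀ r : ℝ, (0:ℝ) < 1 + (deriv v r) ^ 2 := fun r => by positivity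
  set G : ℝ → ℝ := fun r => Real.sqrt ((1 + (deriv v r) ^ 2) / (r ^ 2 + (v r) ^ 2) ^ (n - 1))
    with hG
  have hGpos : ∀ r ∈ Set.Ioo (0 : ℝ) R, 0 < G r := fun r hr =>
    Real.sqrt_pos.2 (div_pos (hA r) (pow_pos (hD r hr) _))
  -- the sign
  set s : ℝ := if 0 < C then 1 else -1 with hs
  have hsC : s * C = |C| := by
    rcases lt_or_gt_of_ne hC with h | h
    · simp [hs, not_lt.2 h.le, h.not_gt, abs_of_neg h]
    · simp [hs, h, abs_of_pos h]
  have habsC : (0:ℝ) < |C| := abs_pos.2 hC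
  set ψ : ℝ → ℝ := fun r => s * θ r with hψdef
  have hψ : ∀ r ∈ Set.Ioo (0 : ℝ) R, HasDerivAt ψ (|C| * G r) r := by
    intro r hr
    have := (hode r hr).const_mul s
    have heq : s * (C * Real.sqrt ((1 + (deriv v r) ^ 2) / (r ^ 2 + (v r) ^ 2) ^ (n - 1)))
        = |C| * G r := by rw [← mul_assoc, hsC]
    rwa [heq] at this
  -- boundedness of ψ
  have hn1 : (0:ℝ) ≤ (n : ℝ) - 1 := by
    have : (2:ℝ) ≤ (n : ℝ) := by exact_mod_cast hn
    linarith
  set B : ℝ := Real.pi / 2 + ((n : ℝ) - 1) * (Real.pi / 2) with hB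
  have hψB : ∀ r : ℝ, |ψ r| ≤ B := by
    intro r
    have h1 : |Real.arctan (deriv v r)| ≤ Real.pi / 2 :=
      abs_le.2 ⟨(Real.neg_pi_div_two_lt_arctan _).le, (Real.arctan_lt_pi_div_two _).le⟩
    have h2 : |Real.arctan (v r / r)| ≤ Real.pi / 2 :=
      abs_le.2 ⟨(Real.neg_pi_div_two_lt_arctan _).le, (Real.arctan_lt_pi_div_two _).le⟩
    have hsabs : |s| = 1 := by rw [hs]; split <;> norm_num
    have : |ψ r| = |θ r| := by
      rw [hψdef]; simp only [abs_mul, hsabs, one_mul]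
    rw [this, hθ]
    calc |Real.arctan (deriv v r) + ((n : ℝ) - 1) * Real.arctan (v r / r)|
        ≤ |Real.arctan (deriv v r)| + |((n : ℝ) - 1) * Real.arctan (v r / r)| := abs_add_le _ _
      _ ≤ Real.pi / 2 + ((n : ℝ) - 1) * (Real.pi / 2) := by
          refine add_le_add h1 ?_
          rw [abs_mul, abs_of_nonneg hn1]
          exact mul_le_mul_of_nonneg_left h2 hn1
  -- monotonicity of ψ on Ioo 0 R
  have hψdiff : DifferentiableOn ℝ ψ (Set.Ioo 0 R) := fun r hr =>
    ((hψ r hr).differentiableAt).differentiableWithinAt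
  have hψcont : ContinuousOn ψ (Set.Ioo 0 R) := hψdiff.continuousOn
  have hψmono : MonotoneOn ψ (Set.Ioo 0 R) := by
    apply monotoneOn_of_deriv_nonneg (convex_Ioo 0 R) hψcont
    · rw [interior_Ioo]; exact hψdiff
    · intro r hr
      rw [interior_Ioo] at hr
      rw [(hψ r hr).deriv]
      exact mul_nonneg habsC.le (Real.sqrt_nonneg _)
  have hne : (Set.Ioo (0:ℝ) R).Nonempty := Set.nonempty_Ioo.2 hR
  have hbb : BddBelow (ψ '' Set.Ioo 0 R) :=
    ⟨-B, by rintro y ⟨r, _, rfl⟩; exact neg_le_of_abs_le (hψB r)⟩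
  have hba : BddAbove (ψ '' Set.Ioo 0 R) :=
    ⟨B, by rintro y ⟨r, _, rfl⟩; exact le_of_abs_le (hψB r)⟩
  set L0 : ℝ := sInf (ψ '' Set.Ioo 0 R) with hL0
  set L1 : ℝ := sSup (ψ '' Set.Ioo 0 R) with hL1
  -- the extension
  set Ψ : ℝ → ℝ := fun x => if x ≤ 0 then L0 else if x < R then ψ x else L1 with hΨ
  have hΨeq : ∀ x ∈ Set.Ioo (0:ℝ) R, Ψ x = ψ x := by
    intro x hx
    simp only [hΨ, not_le.2 hx.1, if_false, hx.2, if_true]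
  have hΨevEq : ∀ x ∈ Set.Ioo (0:ℝ) R, Ψ =ᶠ[nhds x] ψ :=
    fun x hx => eventually_of_mem (isOpen_Ioo.mem_nhds hx) hΨeq
  have hΨderiv : ∀ x ∈ Set.Ioo (0:ℝ) R, HasDerivAt Ψ (|C| * G x) x := fun x hx =>
    (hψ x hx).congr_of_eventuallyEq (hΨevEq x hx)
  -- continuity of Ψ on Icc 0 R
  have hΨcont : ContinuousOn Ψ (Set.Icc 0 R) := by
    intro x hx
    rcases eq_or_lt_of_le hx.1 with h0 | h0
    · -- x = 0
      subst h0
      have hΨ0 : Ψ 0 = L0 := by simp [hΨ]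
      rw [ContinuousWithinAt, hΨ0]
      have hmono : nhdsWithin (0:ℝ) (Set.Icc 0 R) ≤ nhdsWithin 0 (Set.Ici 0) :=
        nhdsWithin_mono _ Set.Icc_subset_Ici_self
      refine Tendsto.mono_left ?_ hmono
      rw [← Set.Ioi_insert, nhdsWithin_insert]
      rw [tendsto_sup]
      constructor
      · have := tendsto_pure_nhds Ψ (0:ℝ)
        rwa [hΨ0] at this
      · have hlim : Tendsto ψ (nhdsWithin 0 (Set.Ioi 0)) (nhds L0) :=
          hψmono.tendsto_nhdsWithin_Ioo_right hne hbb
        refine hlim.congr' ?_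
        filter_upwards [Ioo_mem_nhdsGT_of_mem (Set.mem_Ico.2 ⟨le_refl 0, hR⟩)] with y hy
        exact (hΨeq y hy).symm
    · rcases eq_or_lt_of_le hx.2 with hRx | hRx
      · -- x = R
        subst hRx
        have hΨR : Ψ x = L1 := by
          simp only [hΨ, not_le.2 hR, if_false, lt_irrefl, if_false]
        rw [ContinuousWithinAt, hΨR]
        have hmono : nhdsWithin x (Set.Icc 0 x) ≤ nhdsWithin x (Set.Iic x) :=
          nhdsWithin_mono _ Set.Icc_subset_Iic_self
        refine Tendsto.mono_left ?_ hmono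
        rw [← Set.Iio_insert, nhdsWithin_insert, tendsto_sup]
        constructor
        · have := tendsto_pure_nhds Ψ x
          rwa [hΨR] at this
        · have hlim : Tendsto ψ (nhdsWithin x (Set.Iio x)) (nhds L1) :=
            hψmono.tendsto_nhdsWithin_Ioo_left hne hba
          refine hlim.congr' ?_
          filter_upwards [Ioo_mem_nhdsLT_of_mem (Set.mem_Ioc.2 ⟨hR, le_refl x⟩)] with y hy
          exact (hΨeq y hy).symm
      · -- x interior
        have hxI : x ∈ Set.Ioo 0 R := ⟨h0, hRx⟩
        exact (((hψ x hxI).continuousAt).congr (hΨevEq x hxI).symm).continuousWithinAt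
  -- integrability of |C| * G on Ioo 0 R
  have hint : IntegrableOn (fun r => |C| * G r) (Set.Ioc 0 R) := by
    apply intervalIntegral.integrableOn_deriv_of_nonneg hΨcont hΨderiv
    intro x _
    exact mul_nonneg habsC.le (Real.sqrt_nonneg _)
  have hGint : IntegrableOn G (Set.Ioo 0 R) := by
    have h1 : IntegrableOn (fun r => |C| * G r) (Set.Ioo 0 R) :=
      hint.mono_set Set.Ioo_subset_Ioc_self
    have h2 := h1.const_mul (|C|⁻¹)
    have : (fun r => |C|⁻¹ * (|C| * G r)) = G := by
      funext r
      rw [← mul_assoc, inv_mul_cancel₀ (abs_ne_zero.2 hC), one_mul]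
    rwa [this] at h2
  -- comparison constant
  set K : ℝ := Real.sqrt ((R ^ 2 + M' ^ 2) ^ (n - 2)) with hK
  have hK0 : 0 ≤ K := Real.sqrt_nonneg _
  -- pointwise bound
  have hbound : ∀ r ∈ Set.Ioo (0:ℝ) R,
      Real.sqrt ((1 + (deriv v r) ^ 2) / (r ^ 2 + (v r) ^ 2)) ≤ K * G r := by
    intro r hr
    set A : ℝ := 1 + (deriv v r) ^ 2 with hAdef
    set D : ℝ := r ^ 2 + (v r) ^ 2 with hDdef
    set E : ℝ := R ^ 2 + M' ^ 2 with hEdef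
    have hDpos : 0 < D := hD r hr
    have hDE : D ≤ E := by
      have h1 : r ^ 2 ≤ R ^ 2 := by
        have := hr.1; have := hr.2; nlinarith
      have h2 : (v r) ^ 2 ≤ M' ^ 2 := by
        have := hMle r hr
        have := abs_nonneg (v r)
        nlinarith [sq_abs (v r)]
      exact add_le_add h1 h2
    have hDn2 : 0 < D ^ (n - 2) := pow_pos hDpos _
    have hEpow : D ^ (n - 2) ≤ E ^ (n - 2) := pow_le_pow_left₀ hDpos.le hDE _
    have hEn2 : (0:ℝ) ≤ E ^ (n - 2) := hDn2.le.trans hEpow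
    have key : A / D ≤ E ^ (n - 2) * (A / D ^ (n - 1)) := by
      have hnn : n - 1 = (n - 2) + 1 := by omega
      have hre : E ^ (n - 2) * (A / (D ^ (n - 2) * D)) = (E ^ (n - 2) / D ^ (n - 2)) * (A / D) := by
        field_simp
      rw [hnn, pow_succ, hre]
      exact le_mul_of_one_le_left (div_nonneg (hA r).le hDpos.le) ((one_le_div hDn2).2 hEpow)
    calc Real.sqrt (A / D) ≤ Real.sqrt (E ^ (n - 2) * (A / D ^ (n - 1))) :=
          Real.sqrt_le_sqrt key
      _ = K * G r := by
          rw [Real.sqrt_mul hEn2]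
  -- measurability of the integrand
  have hdc : ContinuousOn (deriv v) (Set.Ioo 0 R) :=
    hv.continuousOn_deriv_of_isOpen isOpen_Ioo le_rfl
  have hvc : ContinuousOn v (Set.Ioo 0 R) := hv.continuousOn
  have hfc : ContinuousOn
      (fun r => Real.sqrt ((1 + (deriv v r) ^ 2) / (r ^ 2 + (v r) ^ 2))) (Set.Ioo 0 R) := by
    apply ContinuousOn.sqrt
    apply ContinuousOn.div
    · exact continuousOn_const.add (hdc.pow 2)
    · exact (continuousOn_id.pow 2).add (hvc.pow 2)
    · exact fun r hr => (hD r hr).ne'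
  -- conclude
  refine (hGint.const_mul K).mono (hfc.aestronglyMeasurable measurableSet_Ioo) ?_
  filter_upwards [ae_restrict_mem measurableSet_Ioo] with r hr
  rw [Real.norm_of_nonneg (Real.sqrt_nonneg _),
    Real.norm_of_nonneg (mul_nonneg hK0 (Real.sqrt_nonneg _))]
  exact hbound r hr
end
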